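/- arXiv:1404.5350 — 8 statements merged into one kernel-verified Lean document; each statement's English description precedes it below -/
import Mathlib

section
/- Let X ⊆ ℝⁿ be a nonempty closed convex set, f₁ : ℝⁿ → ℝ convex, f₂ : ℝⁿ → ℝ convex and differentiable with L-Lipschitz continuous gradient, and F = f₁ + f₂. Suppose the sequence (x^r) ⊆ X is generated by an approximate proximal splitting (APS) method with error constant κ > 0 and stepsizes satisfying 0 < α̲ ≤ α_r ≤ ᾱ < 2/(L + 2κ) for all r. Then for every r, F(x^r) − F(x^{r+1}) ≥ ((2 − 2ᾱκ − ᾱL)/(2ᾱ))·‖x^{r+1} − x^r‖², and the constant (2 − 2ᾱκ − ᾱL)/(2ᾱ) is positive (sufficient decrease property). -/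
/-!
The prox step minimizes the `1`-strongly convex function `α f₁ + ½‖· − c‖²`, so comparing it with
the previous iterate gains an extra `½‖x^{r+1} − x^r‖²`; this gives
`f₁ x^r − f₁ x^{r+1} ≥ ‖d‖²/α_r + ⟪∇f₂ x^r + e^r, d⟫` with `d = x^{r+1} − x^r`. The descent lemma
`f₂ x^{r+1} ≤ f₂ x^r + ⟪∇f₂ x^r, d⟫ + (L/2)‖d‖²` cancels the gradient term, and the error term
costs at most `κ‖d‖²`.
-/

open Set

/-- `p` is the proximal point `prox_φ(x, X)`: the minimizer over `y ∈ X` of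
`φ(y) + (1/2)‖y − x‖²`. -/
def IsProx {E : Type*} [NormedAddCommGroup E] [InnerProductSpace ℝ E]
    (φ : E → ℝ) (X : Set E) (x p : E) : Prop :=
  p ∈ X ∧ ∀ y ∈ X, φ p + (1 / 2) * ‖p - x‖ ^ 2 ≤ φ y + (1 / 2) * ‖y - x‖ ^ 2

open Filter Topology
open scoped RealInnerProductSpace

variable {E : Type*} [NormedAddCommGroup E] [InnerProductSpace ℝ E]

theorem StrongConvexOn.add_mul_norm_sub_sq_le_of_isMinOn {s : Set E} {m : ℝ} {f : E → ℝ}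
    (hf : StrongConvexOn s m f) {p : E} (hmin : IsMinOn f s p) (hp : p ∈ s) {y : E}
    (hy : y ∈ s) : f p + m / 2 * ‖p - y‖ ^ 2 ≤ f y := by
  set c := m / 2 * ‖p - y‖ ^ 2
  have hstep : ∀ t ∈ Ioc (0 : ℝ) 1, f p + (1 - t) * c ≤ f y := by
    rintro t ⟨ht₀, ht₁⟩
    have hseg := hf.2 hp hy (sub_nonneg.2 ht₁) ht₀.le (sub_add_cancel 1 t)
    have hle := isMinOn_iff.1 hmin _ (hf.1 hp hy (sub_nonneg.2 ht₁) ht₀.le (sub_add_cancel 1 t))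
    simp only [smul_eq_mul] at hseg
    have : t * (f p + (1 - t) * c) ≤ t * f y := by simp only [c]; linarith
    exact le_of_mul_le_mul_left this ht₀
  have hlim : Tendsto (fun t : ℝ => f p + (1 - t) * c) (𝓝[>] 0) (𝓝 (f p + c)) := by
    have : Continuous (fun t : ℝ => f p + (1 - t) * c) := by fun_prop
    simpa using (this.tendsto 0).mono_left nhdsWithin_le_nhds
  exact le_of_tendsto hlim (eventually_of_mem (Ioc_mem_nhdsGT one_pos) hstep)

theorem ConvexOn.strongConvexOn_add_half_norm_sub_sq {s : Set E} {φ : E → ℝ}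
    (hφ : ConvexOn ℝ s φ) (c : E) :
    StrongConvexOn s 1 (fun y => φ y + 1 / 2 * ‖y - c‖ ^ 2) := by
  rw [strongConvexOn_iff_convex]
  have hexpand : (fun y => φ y + 1 / 2 * ‖y - c‖ ^ 2 - 1 / 2 * ‖y‖ ^ 2)
      = fun y => φ y + (-(innerSL ℝ c) y + 1 / 2 * ‖c‖ ^ 2) := by
    ext y
    rw [norm_sub_sq_real, innerSL_apply_apply, real_inner_comm]
    ring
  rw [hexpand]
  exact hφ.add (((innerSL ℝ c).toLinearMap.concaveOn hφ.1).neg.add_const _)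

theorem IsProx.add_half_norm_sub_sq_le {φ : E → ℝ} {X : Set E} (hφ : ConvexOn ℝ X φ)
    {c p : E} (hp : IsProx φ X c p) {y : E} (hy : y ∈ X) :
    φ p + 1 / 2 * ‖p - c‖ ^ 2 + 1 / 2 * ‖p - y‖ ^ 2 ≤ φ y + 1 / 2 * ‖y - c‖ ^ 2 := by
  simpa using (hφ.strongConvexOn_add_half_norm_sub_sq c).add_mul_norm_sub_sq_le_of_isMinOn
    (isMinOn_iff.2 hp.2) hp.1 hy

theorem le_add_inner_add_half_mul_norm_sq_of_lipschitz_gradient [CompleteSpace E]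
    {f : E → ℝ} {g : E → E} (hg : ∀ z, HasGradientAt f (g z) z) {L : ℝ}
    (hLip : ∀ z w, ‖g z - g w‖ ≤ L * ‖z - w‖) (x y : E) :
    f y ≤ f x + ⟪g x, y - x⟫ + L / 2 * ‖y - x‖ ^ 2 := by
  set v := y - x
  set ψ : ℝ → ℝ := fun t => f (x + t • v) - t * ⟪g x, v⟫ - t ^ 2 * (L / 2 * ‖v‖ ^ 2)
  have hψ : ∀ t : ℝ, HasDerivAt ψ (⟪g (x + t • v) - g x, v⟫ - t * (L * ‖v‖ ^ 2)) t := by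
    intro t
    have hline : HasDerivAt (fun s : ℝ => x + s • v) v t := by
      simpa using ((hasDerivAt_id t).smul_const v).const_add x
    have hf := (hg (x + t • v)).hasFDerivAt.comp_hasDerivAt t hline
    simp only [InnerProductSpace.toDual_apply_apply] at hf
    refine ((hf.sub ((hasDerivAt_id t).mul_const ⟪g x, v⟫)).sub
      ((hasDerivAt_pow 2 t).mul_const (L / 2 * ‖v‖ ^ 2))).congr_deriv ?_
    rw [inner_sub_left]
    ring
  have hanti : AntitoneOn ψ (Icc 0 1) := by
    refine antitoneOn_of_hasDerivWithinAt_nonpos (convex_Icc 0 1)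
      (fun t _ => (hψ t).continuousAt.continuousWithinAt) (fun t _ => (hψ t).hasDerivWithinAt) ?_
    intro t ht
    rw [interior_Icc] at ht
    have hgrad : ‖g (x + t • v) - g x‖ ≤ L * (t * ‖v‖) := by
      simpa [norm_smul, abs_of_pos ht.1] using hLip (x + t • v) x
    nlinarith [real_inner_le_norm (g (x + t • v) - g x) v, norm_nonneg v]
  have h01 := hanti (left_mem_Icc.2 zero_le_one) (right_mem_Icc.2 zero_le_one) zero_le_one
  simp [ψ, v] at h01
  linarith

theorem IsProx.norm_sub_sq_div_add_inner_le {φ : E → ℝ} {X : Set E} (hφ : ConvexOn ℝ X φ)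
    {a : ℝ} (ha : 0 < a) {x v p : E} (hx : x ∈ X)
    (hp : IsProx (fun y => a * φ y) X (x - a • v) p) :
    ‖p - x‖ ^ 2 / a + ⟪v, p - x⟫ ≤ φ x - φ p := by
  have key := hp.add_half_norm_sub_sq_le (hφ.smul ha.le) hx
  rw [show p - (x - a • v) = (p - x) + a • v by abel, sub_sub_cancel, norm_add_sq_real,
    real_inner_smul_right, norm_smul, Real.norm_of_nonneg ha.le, real_inner_comm] at key
  simp only [smul_eq_mul] at key
  rw [div_add' _ _ _ ha.ne', div_le_iff₀ ha]
  linarith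

theorem aps_step_decrease [CompleteSpace E] {X : Set E} {f₁ f₂ : E → ℝ} (hf₁ : ConvexOn ℝ X f₁)
    {g : E → E} (hg : ∀ z, HasGradientAt f₂ (g z) z) {L : ℝ}
    (hLip : ∀ z w, ‖g z - g w‖ ≤ L * ‖z - w‖) {a κ : ℝ} (ha : 0 < a) {x e p : E} (hx : x ∈ X)
    (hp : IsProx (fun y => a * f₁ y) X (x - a • (g x + e)) p) (he : ‖e‖ ≤ κ * ‖p - x‖) :
    (1 / a - κ - L / 2) * ‖p - x‖ ^ 2 ≤ f₁ x + f₂ x - (f₁ p + f₂ p) := by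
  have hprox := hp.norm_sub_sq_div_add_inner_le hf₁ ha hx
  have hdesc := le_add_inner_add_half_mul_norm_sq_of_lipschitz_gradient hg hLip x p
  have herr : -(κ * ‖p - x‖ ^ 2) ≤ ⟪e, p - x⟫ :=
    calc -(κ * ‖p - x‖ ^ 2) = -(κ * ‖p - x‖ * ‖p - x‖) := by ring
      _ ≤ -(‖e‖ * ‖p - x‖) := by gcongr
      _ ≤ ⟪e, p - x⟫ := neg_le_of_abs_le (abs_real_inner_le_norm e (p - x))
  rw [inner_add_left] at hprox
  linarith [one_div_mul_eq_div a (‖p - x‖ ^ 2)]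

theorem aps_sufficient_decrease_general {n : ℕ}
    (X : Set (EuclideanSpace ℝ (Fin n)))
    (hXcv : Convex ℝ X)
    (f₁ f₂ : EuclideanSpace ℝ (Fin n) → ℝ)
    (hf₁ : ConvexOn ℝ univ f₁)
    (g : EuclideanSpace ℝ (Fin n) → EuclideanSpace ℝ (Fin n))
    (hg : ∀ z, HasGradientAt f₂ (g z) z)
    (L : ℝ) (hLip : ∀ z w, ‖g z - g w‖ ≤ L * ‖z - w‖)
    (F : EuclideanSpace ℝ (Fin n) → ℝ) (hF : ∀ z, F z = f₁ z + f₂ z)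
    (κ : ℝ)
    (α : ℕ → ℝ) (αlo αhi : ℝ) (hαlo : 0 < αlo)
    (hα₁ : ∀ r, αlo ≤ α r) (hα₂ : ∀ r, α r ≤ αhi)
    (hαhi : αhi < 2 / (L + 2 * κ))
    (x e : ℕ → EuclideanSpace ℝ (Fin n)) (hxX : ∀ r, x r ∈ X)
    (hAPS : ∀ r, IsProx (fun y => α r * f₁ y) X
      (x r - α r • (g (x r) + e r)) (x (r + 1)))
    (herr : ∀ r, ‖e r‖ ≤ κ * ‖x (r + 1) - x r‖) :
    0 < (2 - 2 * αhi * κ - αhi * L) / (2 * αhi) ∧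
      ∀ r, F (x r) - F (x (r + 1)) ≥
        (2 - 2 * αhi * κ - αhi * L) / (2 * αhi) * ‖x (r + 1) - x r‖ ^ 2 := by
  have hαhi₀ : 0 < αhi := hαlo.trans_le ((hα₁ 0).trans (hα₂ 0))
  have hLκ : 0 < L + 2 * κ := by
    by_contra! h
    linarith [div_nonpos_of_nonneg_of_nonpos zero_le_two h]
  have hnum : 0 < 2 - 2 * αhi * κ - αhi * L := by
    linarith [(lt_div_iff₀ hLκ).1 hαhi]
  refine ⟨by positivity, fun r => ?_⟩
  have ha : 0 < α r := hαlo.trans_le (hα₁ r)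
  have hconst : (2 - 2 * αhi * κ - αhi * L) / (2 * αhi) = 1 / αhi - κ - L / 2 := by
    field_simp
  rw [ge_iff_le, hconst, hF, hF]
  calc (1 / αhi - κ - L / 2) * ‖x (r + 1) - x r‖ ^ 2
      ≤ (1 / α r - κ - L / 2) * ‖x (r + 1) - x r‖ ^ 2 := by gcongr; exact hα₂ r
    _ ≤ _ := aps_step_decrease (hf₁.subset (subset_univ X) hXcv) hg hLip ha (hxX r) (hAPS r)
        (herr r)

/-- Sufficient decrease for APS methods with stepsizes bounded above by
`ᾱ < 2/(L + 2κ)`. -/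
theorem aps_sufficient_decrease {n : ℕ}
    (X : Set (EuclideanSpace ℝ (Fin n)))
    (hXne : X.Nonempty) (hXcl : IsClosed X) (hXcv : Convex ℝ X)
    (f₁ f₂ : EuclideanSpace ℝ (Fin n) → ℝ)
    (hf₁ : ConvexOn ℝ univ f₁) (hf₂ : ConvexOn ℝ univ f₂)
    (g : EuclideanSpace ℝ (Fin n) → EuclideanSpace ℝ (Fin n))
    (hg : ∀ z, HasGradientAt f₂ (g z) z)
    (L : ℝ) (hL : 0 ≤ L) (hLip : ∀ z w, ‖g z - g w‖ ≤ L * ‖z - w‖)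
    (F : EuclideanSpace ℝ (Fin n) → ℝ) (hF : ∀ z, F z = f₁ z + f₂ z)
    (κ : ℝ) (hκ : 0 < κ)
    (α : ℕ → ℝ) (αlo αhi : ℝ) (hαlo : 0 < αlo)
    (hα₁ : ∀ r, αlo ≤ α r) (hα₂ : ∀ r, α r ≤ αhi)
    (hαhi : αhi < 2 / (L + 2 * κ))
    (x e : ℕ → EuclideanSpace ℝ (Fin n)) (hxX : ∀ r, x r ∈ X)
    (hAPS : ∀ r, IsProx (fun y => α r * f₁ y) X
      (x r - α r • (g (x r) + e r)) (x (r + 1)))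
    (herr : ∀ r, ‖e r‖ ≤ κ * ‖x (r + 1) - x r‖) :
    0 < (2 - 2 * αhi * κ - αhi * L) / (2 * αhi) ∧
      ∀ r, F (x r) - F (x (r + 1)) ≥
        (2 - 2 * αhi * κ - αhi * L) / (2 * αhi) * ‖x (r + 1) - x r‖ ^ 2 :=
  aps_sufficient_decrease_general X hXcv f₁ f₂ hf₁ g hg L hLip F hF κ α αlo αhi hαlo hα₁ hα₂ hαhi x
    e hxX hAPS herr
end

section
/- Let X ⊆ ℝⁿ be a nonempty closed convex set, f₁ : ℝⁿ → ℝ convex, f₂ : ℝⁿ → ℝ convex and differentiable with L-Lipschitz continuous gradient, and F = f₁ + f₂ with nonempty optimal solution set X* over X and optimal value F*. Suppose the sequence (x^r) ⊆ X is generated by an APS method with error constant κ ≥ 0 and stepsizes 0 < α̲ ≤ α_r ≤ ᾱ, and that the sufficient decrease condition F(x^r) − F(x^{r+1}) ≥ c₁‖x^{r+1} − x^r‖² holds for some c₁ > 0 and all r. Then there exists c₂ > 0 such that for all r, F(x^{r+1}) − F* ≤ c₂·( dist(x^r, closure(X*))² + ‖x^{r+1} − x^r‖² ) (cost-to-go estimate).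 -/
open Set

open Filter InnerProductSpace

local notation "⟪" x ", " y "⟫" => @inner ℝ _ _ x y


lemma convex_grad_ineq {E : Type*} [NormedAddCommGroup E] [InnerProductSpace ℝ E] [CompleteSpace E]
    {f : E → ℝ} (hf : ConvexOn ℝ univ f) {x gx : E} (hg : HasGradientAt f gx x)
    (y : E) : f x + ⟪gx, y - x⟫ ≤ f y := by
  have hfd : HasFDerivAt f (toDual ℝ E gx) x := hg.hasFDerivAt
  have hc : Tendsto (fun n : ℕ => ‖((n : ℝ) + 1)‖) atTop atTop := by
    simp only [Real.norm_eq_abs]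
    refine tendsto_abs_atTop_atTop.comp ?_
    exact tendsto_atTop_add_const_right _ 1 tendsto_natCast_atTop_atTop
  have hlim := hfd.lim (y - x) hc
  have key : ∀ n : ℕ, ((n : ℝ) + 1) • (f (x + ((n : ℝ) + 1)⁻¹ • (y - x)) - f x)
      ≤ f y - f x := by
    intro n
    set t : ℝ := ((n : ℝ) + 1)⁻¹ with ht
    have htpos : 0 < t := by positivity
    have ht1 : t ≤ 1 := by
      rw [ht]
      rw [inv_le_one_iff₀]
      right; linarith [Nat.cast_nonneg (α := ℝ) n]
    have hcomb : x + t • (y - x) = (1 - t) • x + t • y := by module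
    have := hf.2 (mem_univ x) (mem_univ y) (by linarith : (0:ℝ) ≤ 1 - t)
      (le_of_lt htpos) (by ring)
    simp only [smul_eq_mul] at this
    rw [← hcomb] at this
    have h2 : f (x + t • (y - x)) - f x ≤ t * (f y - f x) := by linarith
    have h3 : ((n : ℝ) + 1) = t⁻¹ := by rw [ht, inv_inv]
    rw [h3, smul_eq_mul]
    rw [inv_mul_le_iff₀ htpos]
    linarith [h2]
  have hle := le_of_tendsto hlim (Eventually.of_forall key)
  have : (toDual ℝ E gx) (y - x) = ⟪gx, y - x⟫ := by simp
  rw [this] at hle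
  linarith

lemma descent_lemma {E : Type*} [NormedAddCommGroup E] [InnerProductSpace ℝ E] [CompleteSpace E]
    {f : E → ℝ} {g : E → E} (hg : ∀ z, HasGradientAt f (g z) z)
    {L : ℝ} (hL : 0 ≤ L) (hLip : ∀ z w, ‖g z - g w‖ ≤ L * ‖z - w‖) (x y : E) :
    f y ≤ f x + ⟪g x, y - x⟫ + L * ‖y - x‖ ^ 2 := by
  set s := segment ℝ x y with hs
  have hconv : Convex ℝ s := convex_segment x y
  set h : E → ℝ := fun z => f z - ⟪g x, z⟫ with hh
  have hderiv : ∀ z ∈ s, HasFDerivWithinAt h (toDual ℝ E (g z - g x)) s z := by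
    intro z hz
    have h1 : HasFDerivAt f (toDual ℝ E (g z)) z := (hg z).hasFDerivAt
    have h2 : HasFDerivAt (fun w => ⟪g x, w⟫) (innerSL ℝ (g x)) z :=
      (innerSL ℝ (g x)).hasFDerivAt
    have h3 := h1.sub h2
    have heq : toDual ℝ E (g z) - innerSL ℝ (g x) = toDual ℝ E (g z - g x) := by
      ext w; simp [inner_sub_left]
    rw [heq] at h3
    exact h3.hasFDerivWithinAt
  have bound : ∀ z ∈ s, ‖toDual ℝ E (g z - g x)‖ ≤ L * ‖y - x‖ := by
    intro z hz
    rw [(toDual ℝ E).norm_map]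
    refine le_trans (hLip z x) ?_
    have : ‖z - x‖ ≤ ‖y - x‖ := by
      obtain ⟨a, b, ha, hb, hab, rfl⟩ := hz
      have : a • x + b • y - x = b • (y - x) := by
        have : a = 1 - b := by linarith
        rw [this]; module
      rw [this, norm_smul, Real.norm_eq_abs, abs_of_nonneg hb]
      have hb1 : b ≤ 1 := by linarith
      nlinarith [norm_nonneg (y - x)]
    nlinarith
  have hmvt := hconv.norm_image_sub_le_of_norm_hasFDerivWithin_le hderiv bound
    (left_mem_segment ℝ x y) (right_mem_segment ℝ x y)
  have h4 : h y - h x ≤ L * ‖y - x‖ * ‖y - x‖ :=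
    le_trans (le_abs_self _) (by rw [← Real.norm_eq_abs]; exact hmvt)
  have h5 : ⟪g x, y - x⟫ = ⟪g x, y⟫ - ⟪g x, x⟫ := inner_sub_right _ _ _
  simp only [hh] at h4
  nlinarith [h4]

lemma le_add_eps {a b : ℝ} (h : ∀ ε > (0:ℝ), a ≤ b + ε) : a ≤ b := by
  by_contra hc
  push_neg at hc
  have := h ((a - b) / 2) (by linarith)
  linarith


/-- Cost-to-go estimate for APS methods satisfying the sufficient decrease condition. -/
theorem aps_cost_to_go {n : ℕ}
    (X : Set (EuclideanSpace ℝ (Fin n)))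
    (hXne : X.Nonempty) (hXcl : IsClosed X) (hXcv : Convex ℝ X)
    (f₁ f₂ : EuclideanSpace ℝ (Fin n) → ℝ)
    (hf₁ : ConvexOn ℝ univ f₁) (hf₂ : ConvexOn ℝ univ f₂)
    (g : EuclideanSpace ℝ (Fin n) → EuclideanSpace ℝ (Fin n))
    (hg : ∀ z, HasGradientAt f₂ (g z) z)
    (L : ℝ) (hL : 0 ≤ L) (hLip : ∀ z w, ‖g z - g w‖ ≤ L * ‖z - w‖)
    (F : EuclideanSpace ℝ (Fin n) → ℝ) (hF : ∀ z, F z = f₁ z + f₂ z)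
    (Xstar : Set (EuclideanSpace ℝ (Fin n)))
    (hXstar : Xstar = {y | y ∈ X ∧ ∀ z ∈ X, F y ≤ F z})
    (hXstarne : Xstar.Nonempty)
    (Fstar : ℝ) (hFstar : ∀ y ∈ Xstar, F y = Fstar)
    (κ : ℝ) (hκ : 0 ≤ κ)
    (α : ℕ → ℝ) (αlo αhi : ℝ) (hαlo : 0 < αlo)
    (hα₁ : ∀ r, αlo ≤ α r) (hα₂ : ∀ r, α r ≤ αhi)
    (x e : ℕ → EuclideanSpace ℝ (Fin n)) (hxX : ∀ r, x r ∈ X)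
    (hAPS : ∀ r, IsProx (fun y => α r * f₁ y) X
      (x r - α r • (g (x r) + e r)) (x (r + 1)))
    (herr : ∀ r, ‖e r‖ ≤ κ * ‖x (r + 1) - x r‖)
    (c₁ : ℝ) (hc₁ : 0 < c₁)
    (hdec : ∀ r, F (x r) - F (x (r + 1)) ≥ c₁ * ‖x (r + 1) - x r‖ ^ 2) :
    ∃ c₂ > (0 : ℝ), ∀ r, F (x (r + 1)) - Fstar ≤
      c₂ * ((Metric.infDist (x r) (closure Xstar)) ^ 2 + ‖x (r + 1) - x r‖ ^ 2) := by
  set β : ℝ := 1 / αlo with hβdef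
  have hβ : 0 < β := by positivity
  refine ⟨3 * β + 2 * κ + L + 1, by positivity, fun r => ?_⟩
  have hc₂ : (0:ℝ) < 3 * β + 2 * κ + L + 1 := by positivity
  set p := x (r + 1) with hp
  set xr := x r with hxr
  set t : ℝ := ‖p - xr‖ with htdef
  clear_value p xr t
  have ht0 : 0 ≤ t := htdef ▸ norm_nonneg _
  have hαr : 0 < α r := lt_of_lt_of_le hαlo (hα₁ r)
  -- key estimate for any y ∈ Xstar
  have key : ∀ y ∈ Xstar, F p - Fstar ≤ (3 * β + 2 * κ + L + 1) * (‖y - xr‖ ^ 2 + t ^ 2) := by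
    intro y hy
    have hyX : y ∈ X := by rw [hXstar] at hy; exact hy.1
    have hFy : F y = Fstar := hFstar y hy
    set a : ℝ := ‖y - p‖ with hadef
    have ha0 : 0 ≤ a := norm_nonneg _
    set z := xr - α r • (g xr + e r) with hz
    clear_value a z
    -- prox inequality
    have hprox := (hAPS r).2 y hyX
    rw [← hp, ← hxr] at hprox
    rw [← hz] at hprox
    simp only [] at hprox
    -- expand norms
    have hexp : ‖y - z‖ ^ 2 = a ^ 2 + 2 * ⟪y - p, p - z⟫ + ‖p - z‖ ^ 2 := by
      have h0 : y - z = (y - p) + (p - z) := by abel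
      rw [h0, norm_add_sq_real, hadef]
    have hpz : p - z = (p - xr) + α r • (g xr + e r) := by rw [hz]; abel
    have hinner : ⟪y - p, p - z⟫ = ⟪y - p, p - xr⟫
        + α r * ⟪y - p, g xr⟫ + α r * ⟪y - p, e r⟫ := by
      rw [hpz, inner_add_right, real_inner_smul_right, inner_add_right]; ring
    have hA : α r * (f₁ p - f₁ y) ≤ (1/2) * a ^ 2 + ⟪y - p, p - xr⟫
        + α r * ⟪y - p, g xr⟫ + α r * ⟪y - p, e r⟫ := by
      rw [hexp, hinner] at hprox
      linarith
    -- descent lemma and convexity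
    have hB : f₂ p ≤ f₂ xr + ⟪g xr, p - xr⟫ + L * t ^ 2 := by
      have h0 := descent_lemma hg hL hLip xr p
      rwa [← htdef] at h0
    have hC : f₂ xr + ⟪g xr, y - xr⟫ ≤ f₂ y := convex_grad_ineq hf₂ (hg xr) y
    have hinn2 : ⟪g xr, p - xr⟫ - ⟪g xr, y - xr⟫ = ⟪g xr, p - y⟫ := by
      rw [← inner_sub_right]; congr 1; abel
    have hinn3 : ⟪y - p, g xr⟫ + ⟪g xr, p - y⟫ = 0 := by
      have h1 : ⟪g xr, p - y⟫ = ⟪g xr, -(y - p)⟫ := by congr 1; abel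
      rw [h1, inner_neg_right, real_inner_comm]; ring
    have hinn3' : α r * ⟪y - p, g xr⟫ + α r * ⟪g xr, p - y⟫ = 0 := by
      rw [← mul_add, hinn3, mul_zero]
    -- Cauchy-Schwarz bounds
    have hCS1 : ⟪y - p, p - xr⟫ ≤ a * t := by
      rw [hadef, htdef]; exact real_inner_le_norm _ _
    have hCS2 : ⟪y - p, e r⟫ ≤ a * (κ * t) := by
      refine le_trans (real_inner_le_norm _ _) ?_
      have h0 := herr r
      rw [← hp, ← hxr, ← htdef] at h0
      rw [← hadef]
      have h1 := mul_le_mul_of_nonneg_left h0 ha0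
      linarith only [h1]
    -- combined α-scaled inequality
    have hf2diff : f₂ p - f₂ y ≤ ⟪g xr, p - y⟫ + L * t ^ 2 := by linarith
    have hsumα : α r * (F p - F y) ≤ ((1/2) * a ^ 2 + ⟪y - p, p - xr⟫)
        + α r * (⟪y - p, e r⟫ + L * t ^ 2) := by
      rw [hF p, hF y]
      have h2 := mul_le_mul_of_nonneg_left hf2diff hαr.le
      linarith [hA, h2, hinn3']
    -- remove α
    set Q : ℝ := (1/2) * a ^ 2 + a * t with hQdef
    have hQ0 : 0 ≤ Q := by positivity
    set R : ℝ := ⟪y - p, e r⟫ + L * t ^ 2 with hRdef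
    clear_value Q R
    have hsumα2 : α r * (F p - F y) ≤ Q + α r * R := by
      have : (1/2) * a ^ 2 + ⟪y - p, p - xr⟫ ≤ Q := by rw [hQdef]; linarith
      linarith [hsumα, this]
    have hQeq : (β * Q) * αlo = Q := by
      rw [hβdef]; field_simp
    have h6 : F p - F y ≤ β * Q + R := by
      have hmul : (β * Q) * αlo ≤ (β * Q) * α r :=
        mul_le_mul_of_nonneg_left (hα₁ r) (mul_nonneg hβ.le hQ0)
      have key2 : (F p - F y) * α r ≤ (β * Q + R) * α r := by
        nlinarith only [hsumα2, hmul, hQeq]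
      exact le_of_mul_le_mul_right key2 hαr
    have hFinal : F p - F y ≤ β * ((1/2) * a ^ 2 + a * t) + κ * (t * a) + L * t ^ 2 := by
      have hβQ : β * Q = β * ((1/2) * a ^ 2 + a * t) := by rw [hQdef]
      have hR : R ≤ κ * (t * a) + L * t ^ 2 := by rw [hRdef]; linarith only [hCS2]
      linarith only [h6, hR, hβQ]
    rw [hFy] at hFinal
    -- arithmetic
    set d' : ℝ := ‖y - xr‖ with hd'
    clear_value d'
    have hd'0 : 0 ≤ d' := hd' ▸ norm_nonneg _
    have htri : a ≤ d' + t := by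
      rw [hadef, htdef, hd']
      have h0 : y - p = (y - xr) + (xr - p) := by abel
      calc ‖y - p‖ ≤ ‖y - xr‖ + ‖xr - p‖ := by rw [h0]; exact norm_add_le _ _
        _ = ‖y - xr‖ + ‖p - xr‖ := by rw [norm_sub_rev xr p]
    have e1 : (1/2) * a ^ 2 + a * t ≤ 3 * (d' ^ 2 + t ^ 2) := by
      nlinarith only [sq_nonneg (d' - t), mul_le_mul htri htri ha0 (by positivity : (0:ℝ) ≤ d' + t),
        mul_le_mul_of_nonneg_right htri ht0, ht0, hd'0, ha0]
    have e2 : t * a ≤ 2 * (d' ^ 2 + t ^ 2) := by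
      nlinarith only [mul_le_mul_of_nonneg_left htri ht0, sq_nonneg (d' - t)]
    have e3 : t ^ 2 ≤ d' ^ 2 + t ^ 2 := by linarith only [sq_nonneg d']
    nlinarith only [hFinal, mul_le_mul_of_nonneg_left e1 hβ.le, mul_le_mul_of_nonneg_left e2 hκ,
      mul_le_mul_of_nonneg_left e3 hL, add_nonneg (sq_nonneg d') (sq_nonneg t)]
  -- epsilon argument
  rw [Metric.infDist_closure]
  set d : ℝ := Metric.infDist xr Xstar with hd
  have hd0 : 0 ≤ d := Metric.infDist_nonneg
  refine le_add_eps fun ε hε => ?_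
  set C : ℝ := 3 * β + 2 * κ + L + 1 with hC
  have hCpos : 0 < C := by rw [hC]; exact hc₂
  clear_value C
  set ε' : ℝ := min 1 (ε / (C * (2 * d + 1))) with hε'
  have hε'pos : 0 < ε' := by
    apply lt_min one_pos; positivity
  have hlt : Metric.infDist xr Xstar < d + ε' := by rw [← hd]; linarith
  obtain ⟨y, hy, hdist⟩ := (Metric.infDist_lt_iff hXstarne).mp hlt
  have hyd : ‖y - xr‖ < d + ε' := by
    rw [dist_eq_norm, norm_sub_rev] at hdist; exact hdist
  have hsq : ‖y - xr‖ ^ 2 ≤ (d + ε') ^ 2 := by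
    nlinarith [norm_nonneg (y - xr)]
  have hkey := key y hy
  have hε'le : ε' ≤ ε / (C * (2 * d + 1)) := min_le_right _ _
  have hε'1 : ε' ≤ 1 := min_le_left _ _
  have h2d1 : 0 < C * (2 * d + 1) := by positivity
  clear_value ε'
  have hεbound : C * (2 * d * ε' + ε' ^ 2) ≤ ε := by
    have h1 : ε' * (C * (2 * d + 1)) ≤ ε := by
      rw [← le_div_iff₀ h2d1]; exact hε'le
    nlinarith only [h1, mul_le_mul_of_nonneg_left hε'1 (mul_nonneg hCpos.le hε'pos.le), hd0, hCpos, hε'pos]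
  linarith only [hkey, hεbound, mul_le_mul_of_nonneg_left hsq hCpos.le]
end

section
/- Let X ⊆ ℝⁿ be a nonempty closed convex set, f₁ : ℝⁿ → ℝ convex, f₂ : ℝⁿ → ℝ convex and differentiable with L-Lipschitz continuous gradient, and F = f₁ + f₂ with nonempty optimal solution set X* over X and optimal value F*. Assume the local error bound property holds for this problem. Suppose (x^r) ⊆ X is generated by an APS method with error constant κ > 0 and stepsizes 0 < α̲ ≤ α_r ≤ ᾱ, and the sufficient decrease condition F(x^r) − F(x^{r+1}) ≥ c₁‖x^{r+1} − x^r‖² holds for some c₁ > 0 and all r. Then (x^r) converges R-linearly to an optimal solution: there exist x* ∈ closure(X*), C > 0, and ρ ∈ (0,1) such that ‖x^r − x*‖ ≤ C·ρ^r for all r. -/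
/-
The optimality inequalities of the two proximal problems defining `p (x r)` and `x (r + 1)`
bound the residual `‖x r - p (x r)‖` by a multiple of the step `‖x (r + 1) - x r‖`, and the gap
`F (x (r + 1)) - F*` by a multiple of `‖x (r + 1) - x r‖ * (dist (x r) X* + ‖x (r + 1) - x r‖)`.
For a small step the error bound makes the gap quadratic in the step, so sufficient decrease
shrinks it by a fixed factor; for a large step sufficient decrease removes a fixed amount from a
gap that never exceeds `F (x 0) - F*`, again a fixed fraction. Hence the gap, and with it the
steps, decay geometrically, `x r` converges R-linearly, and its limit lies in the closure of `X*`
because `dist (x r) X*` is eventually at most `τ` times the residual.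
-/

open Set Filter Topology RealInnerProductSpace Metric

theorem mul_le_of_mul_sq_le {a b c t s : ℝ} (ha : 0 ≤ a) (hab : a ≤ b) (hc : 0 ≤ c)
    (ht : 0 ≤ t) (hs : 0 ≤ s) (h : a * t ^ 2 ≤ b * t * s + c * s ^ 2) :
    a * t ≤ (b + c) * s := by
  rcases le_total t s with hts | hst
  · nlinarith
  · have hcs : c * s ^ 2 ≤ c * t * s := by
      nlinarith [mul_nonneg (mul_nonneg hc hs) (sub_nonneg.2 hst)]
    rcases ht.eq_or_lt with rfl | ht
    · nlinarith
    · exact le_of_mul_le_mul_left (by nlinarith) ht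

section Proximal

variable {E : Type*} [NormedAddCommGroup E] [InnerProductSpace ℝ E]

theorem IsProx.inner_sub_le {φ : E → ℝ} {X : Set E} {x p y : E} (h : IsProx φ X x p)
    (hφ : ConvexOn ℝ univ φ) (hX : Convex ℝ X) (hy : y ∈ X) :
    ⟪x - p, y - p⟫ ≤ φ y - φ p := by
  have hsmall : ∀ t ∈ Ioc (0 : ℝ) 1,
      ⟪x - p, y - p⟫ - (φ y - φ p) ≤ t * (‖y - p‖ ^ 2 / 2) := by
    rintro t ⟨ht₀, ht₁⟩
    have hmin := h.2 _ (hX.add_smul_sub_mem h.1 hy ⟨ht₀.le, ht₁⟩)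
    have hconv : φ (p + t • (y - p)) ≤ (1 - t) * φ p + t * φ y := by
      rw [show p + t • (y - p) = (1 - t) • p + t • y by module]
      exact hφ.2 (mem_univ p) (mem_univ y) (sub_nonneg.2 ht₁) ht₀.le (sub_add_cancel 1 t)
    have hexpand : ‖p + t • (y - p) - x‖ ^ 2
        = ‖p - x‖ ^ 2 - 2 * t * ⟪x - p, y - p⟫ + t ^ 2 * ‖y - p‖ ^ 2 := by
      rw [add_sub_right_comm, norm_add_sq_real, inner_smul_right, norm_smul,
        Real.norm_of_nonneg ht₀.le, ← neg_sub x p, inner_neg_left]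
      ring
    have : t * (⟪x - p, y - p⟫ - (φ y - φ p)) ≤ t * (t * (‖y - p‖ ^ 2 / 2)) := by
      nlinarith
    exact le_of_mul_le_mul_left this ht₀
  have hlim : Tendsto (fun t : ℝ => t * (‖y - p‖ ^ 2 / 2)) (𝓝[>] 0) (𝓝 0) := by
    simpa using (tendsto_id.mul_const (‖y - p‖ ^ 2 / 2)).mono_left
      (nhdsWithin_le_nhds (a := (0 : ℝ)))
  linarith [ge_of_tendsto hlim (mem_of_superset (Ioc_mem_nhdsGT one_pos) hsmall)]

theorem ConvexOn.inner_le_sub_of_hasGradientAt [CompleteSpace E] {f : E → ℝ}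
    (hf : ConvexOn ℝ univ f) {z v : E} (hv : HasGradientAt f v z) (y : E) :
    ⟪v, y - z⟫ ≤ f y - f z := by
  let ℓ : ℝ →ᵃ[ℝ] E := AffineMap.lineMap z y
  have hline : HasDerivAt (f ∘ ℓ) ⟪v, y - z⟫ 0 := by
    have hv' : HasFDerivAt f (InnerProductSpace.toDual ℝ E v) (ℓ 0) := by
      simpa [ℓ] using hv.hasFDerivAt
    simpa using hv'.comp_hasDerivAt (0 : ℝ) AffineMap.hasDerivAt_lineMap
  simpa [slope_def_field, ℓ] using
    (hf.comp_affineMap ℓ).le_slope_of_hasDerivAt (mem_univ 0) (mem_univ 1) one_pos hline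

section APSStep

variable {X : Set E} {f₁ : E → ℝ} {z z' p v e : E} {α αlo κ : ℝ}

theorem aps_residual_le (hf₁ : ConvexOn ℝ univ f₁) (hX : Convex ℝ X) (hαlo : 0 < αlo)
    (hα : αlo ≤ α) (hκ : 0 ≤ κ) (hp : IsProx f₁ X (z - v) p)
    (hz' : IsProx (fun y => α * f₁ y) X (z - α • (v + e)) z') (he : ‖e‖ ≤ κ * ‖z' - z‖) :
    ‖z - p‖ ≤ (1 + 1 / αlo + 2 * κ) * dist z z' := by
  have hα₀ : 0 < α := hαlo.trans_le hα
  have hz'p := hz'.inner_sub_le (hf₁.smul hα₀.le) hX hp.1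
  have hpz' := hp.inner_sub_le hf₁ hX hz'.1
  have hsum : α * ‖p - z‖ ^ 2 + ‖z' - z‖ ^ 2
      ≤ (1 + α) * ⟪p - z, z' - z⟫ + α * ⟪e, (p - z) - (z' - z)⟫ := by
    rw [← real_inner_self_eq_norm_sq, ← real_inner_self_eq_norm_sq]
    simp only [inner_sub_left, inner_sub_right, inner_add_right, real_inner_smul_right,
      real_inner_comm] at hz'p hpz' ⊢
    linear_combination hz'p + α * hpz'
  have hcross : ⟪p - z, z' - z⟫ ≤ ‖p - z‖ * ‖z' - z‖ := real_inner_le_norm _ _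
  have herr : ⟪e, (p - z) - (z' - z)⟫ ≤ κ * ‖z' - z‖ * (‖p - z‖ + ‖z' - z‖) :=
    (real_inner_le_norm _ _).trans <| mul_le_mul he (norm_sub_le _ _) (norm_nonneg _)
      (by positivity)
  have hquad : α * ‖p - z‖ ^ 2
      ≤ (1 + α + α * κ) * ‖p - z‖ * ‖z' - z‖ + α * κ * ‖z' - z‖ ^ 2 := by
    nlinarith
  have hlin := mul_le_of_mul_sq_le hα₀.le (by nlinarith) (by positivity) (norm_nonneg _)
    (norm_nonneg _) hquad
  have hres : ‖p - z‖ ≤ (1 + 1 / α + 2 * κ) * ‖z' - z‖ := by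
    rw [← mul_le_mul_iff_right₀ hα₀]
    calc α * ‖p - z‖ ≤ (1 + α + α * κ + α * κ) * ‖z' - z‖ := hlin
      _ = α * ((1 + 1 / α + 2 * κ) * ‖z' - z‖) := by field_simp; ring
  rw [norm_sub_rev, dist_eq_norm']
  exact hres.trans (by gcongr)

theorem aps_objective_sub_le [CompleteSpace E] {f₂ : E → ℝ} {v' y : E} {L : ℝ}
    (hf₁ : ConvexOn ℝ univ f₁) (hf₂ : ConvexOn ℝ univ f₂) (hX : Convex ℝ X) (hαlo : 0 < αlo)
    (hα : αlo ≤ α) (hL : 0 ≤ L) (hκ : 0 ≤ κ)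
    (hz' : IsProx (fun y => α * f₁ y) X (z - α • (v + e)) z') (hv' : HasGradientAt f₂ v' z')
    (hLip : ‖v - v'‖ ≤ L * ‖z - z'‖) (he : ‖e‖ ≤ κ * ‖z' - z‖) (hy : y ∈ X) :
    f₁ z' + f₂ z' - (f₁ y + f₂ y) ≤ (1 / αlo + L + κ) * dist z z' * (dist z y + dist z z') := by
  have hα₀ : 0 < α := hαlo.trans_le hα
  have hvi := hz'.inner_sub_le (hf₁.smul hα₀.le) hX hy
  have hgrad := hf₂.inner_le_sub_of_hasGradientAt hv' y
  have hkey : α * (f₁ z' + f₂ z' - (f₁ y + f₂ y)) ≤ ⟪(z' - z) + α • (v - v' + e), y - z'⟫ := by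
    simp only [inner_sub_left, inner_sub_right, inner_add_left, inner_add_right,
      real_inner_smul_right, real_inner_comm] at hvi hgrad ⊢
    linear_combination hvi + α * hgrad
  have hdir : ‖(z' - z) + α • (v - v' + e)‖ ≤ (1 + α * (L + κ)) * ‖z' - z‖ := by
    rw [norm_sub_rev z z'] at hLip
    calc _ ≤ ‖z' - z‖ + ‖α • (v - v' + e)‖ := norm_add_le _ _
      _ ≤ ‖z' - z‖ + α * (‖v - v'‖ + ‖e‖) := by
          rw [norm_smul, Real.norm_of_nonneg hα₀.le]
          gcongr
          exact norm_add_le _ _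
      _ ≤ (1 + α * (L + κ)) * ‖z' - z‖ := by nlinarith
  have hgap : f₁ z' + f₂ z' - (f₁ y + f₂ y) ≤ (1 / α + L + κ) * ‖z' - z‖ * ‖y - z'‖ := by
    rw [← mul_le_mul_iff_right₀ hα₀]
    calc _ ≤ ⟪(z' - z) + α • (v - v' + e), y - z'⟫ := hkey
      _ ≤ ‖(z' - z) + α • (v - v' + e)‖ * ‖y - z'‖ := real_inner_le_norm _ _
      _ ≤ (1 + α * (L + κ)) * ‖z' - z‖ * ‖y - z'‖ := by gcongr
      _ = α * ((1 / α + L + κ) * ‖z' - z‖ * ‖y - z'‖) := by field_simp; ring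
  rw [← dist_eq_norm', ← dist_eq_norm] at hgap
  exact hgap.trans (by gcongr; exact dist_triangle_left _ _ _)

end APSStep

end Proximal

theorem le_mul_infDist_add {α : Type*} [PseudoMetricSpace α] {s : Set α} (hs : s.Nonempty)
    {x : α} {a b c : ℝ} (hc : 0 ≤ c) (h : ∀ y ∈ s, a ≤ c * (dist x y + b)) :
    a ≤ c * (infDist x s + b) := by
  rcases hc.eq_or_lt with rfl | hc
  · obtain ⟨y, hy⟩ := hs
    simpa using h y hy
  · have : a / c - b ≤ infDist x s := (le_infDist hs).2 fun y hy => by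
      rw [sub_le_iff_le_add, div_le_iff₀ hc]; linarith [h y hy]
    rw [sub_le_iff_le_add, div_le_iff₀ hc] at this
    linarith

theorem exists_contraction_of_local_error_bound {D s φ : ℕ → ℝ} {c K τ ε : ℝ} (hc : 0 < c)
    (hK : 0 < K) (hτ : 0 ≤ τ) (hε : 0 < ε) (hD : ∀ r, 0 ≤ D r) (hs : ∀ r, 0 ≤ s r)
    (hdec : ∀ r, c * s r ^ 2 ≤ D r - D (r + 1))
    (hcost : ∀ r, D (r + 1) ≤ K * s r * (φ r + s r))
    (hEB : ∀ r, s r ≤ ε → φ r ≤ τ * s r) :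
    ∃ θ ∈ Ioo (0 : ℝ) 1, ∀ r, D (r + 1) ≤ θ * D r := by
  have hanti : Antitone D := antitone_nat_of_succ_le fun r => by nlinarith [hdec r]
  set θ₁ := K * (τ + 1) / (c + K * (τ + 1))
  set θ₂ := D 0 / (c * ε ^ 2 + D 0)
  have hθ₁ : θ₁ ∈ Ioo (0 : ℝ) 1 :=
    ⟨by positivity, (div_lt_one (by positivity)).2 (by linarith)⟩
  have hcε : 0 < c * ε ^ 2 := by positivity
  have hθ₂ : θ₂ < 1 := (div_lt_one (by linarith [hD 0])).2 (by linarith)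
  refine ⟨max θ₁ θ₂, ⟨lt_max_of_lt_left hθ₁.1, max_lt hθ₁.2 hθ₂⟩, fun r => ?_⟩
  rcases le_or_gt (s r) ε with hsmall | hlarge
  · have : D (r + 1) ≤ K * (τ + 1) * s r ^ 2 := by
      nlinarith [hcost r, hEB r hsmall, mul_nonneg hK.le (hs r)]
    have : D (r + 1) ≤ θ₁ * D r := by
      rw [div_mul_eq_mul_div, le_div_iff₀ (by positivity)]
      nlinarith [mul_le_mul_of_nonneg_left this hc.le,
        mul_le_mul_of_nonneg_left (hdec r) (by positivity : 0 ≤ K * (τ + 1))]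
    exact this.trans (mul_le_mul_of_nonneg_right (le_max_left _ _) (hD r))
  · have hstep : D (r + 1) ≤ D r - c * ε ^ 2 := by
      nlinarith [hdec r, mul_le_mul_of_nonneg_left (pow_le_pow_left₀ hε.le hlarge.le 2) hc.le]
    have : D (r + 1) ≤ θ₂ * D r := by
      rw [div_mul_eq_mul_div, le_div_iff₀ (by linarith [hD 0])]
      nlinarith [mul_le_mul_of_nonneg_left hstep (hD 0),
        mul_le_mul_of_nonneg_left (hanti (Nat.zero_le (r + 1))) hcε.le]
    exact this.trans (mul_le_mul_of_nonneg_right (le_max_right _ _) (hD r))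

theorem le_geometric_of_contraction {D s : ℕ → ℝ} {c ρ : ℝ} (hc : 0 < c) (hρ : 0 ≤ ρ)
    (hD : ∀ r, 0 ≤ D r) (hdec : ∀ r, c * s r ^ 2 ≤ D r - D (r + 1))
    (hρD : ∀ r, D (r + 1) ≤ ρ ^ 2 * D r) (r : ℕ) : s r ≤ √(D 0 / c) * ρ ^ r := by
  have hgeom : ∀ r, D r ≤ (ρ ^ r) ^ 2 * D 0 := by
    intro r
    induction r with
    | zero => simp
    | succ r ih => calc D (r + 1) ≤ ρ ^ 2 * D r := hρD r
        _ ≤ ρ ^ 2 * ((ρ ^ r) ^ 2 * D 0) := by gcongr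
        _ = (ρ ^ (r + 1)) ^ 2 * D 0 := by ring
  refine (abs_le_of_sq_le_sq' ?_ (by positivity)).2
  rw [mul_pow, Real.sq_sqrt (div_nonneg (hD 0) hc.le), div_mul_eq_mul_div, le_div_iff₀ hc]
  nlinarith [hdec r, hD (r + 1), hgeom r]

theorem mem_closure_of_tendsto_infDist {α : Type*} [PseudoMetricSpace α] {S : Set α}
    (hS : S.Nonempty) {x : ℕ → α} {a : α} (hx : Tendsto x atTop (𝓝 a))
    (hxS : Tendsto (fun r => infDist (x r) S) atTop (𝓝 0)) : a ∈ closure S :=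
  (mem_closure_iff_infDist_zero hS).2 <|
    tendsto_nhds_unique (((continuous_infDist_pt S).tendsto a).comp hx) hxS

theorem exists_linear_convergence_of_local_error_bound {α : Type*} [PseudoMetricSpace α]
    [CompleteSpace α] {S : Set α} (hS : S.Nonempty) {x : ℕ → α} {D : ℕ → ℝ} {c K τ ε : ℝ}
    (hc : 0 < c) (hK : 0 < K) (hτ : 0 ≤ τ) (hε : 0 < ε) (hD : ∀ r, 0 ≤ D r)
    (hdec : ∀ r, c * dist (x r) (x (r + 1)) ^ 2 ≤ D r - D (r + 1))
    (hcost : ∀ r, D (r + 1) ≤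
      K * dist (x r) (x (r + 1)) * (infDist (x r) S + dist (x r) (x (r + 1))))
    (hEB : ∀ r, dist (x r) (x (r + 1)) ≤ ε → infDist (x r) S ≤ τ * dist (x r) (x (r + 1))) :
    ∃ a ∈ closure S, ∃ C > (0 : ℝ), ∃ ρ ∈ Ioo (0 : ℝ) 1, ∀ r, dist (x r) a ≤ C * ρ ^ r := by
  obtain ⟨θ, ⟨hθ₀, hθ₁⟩, hθ⟩ := exists_contraction_of_local_error_bound hc hK hτ hε hD
    (fun r => dist_nonneg) hdec hcost hEB
  set ρ := √θ
  set B := √(D 0 / c)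
  have hρ : ρ ∈ Ioo (0 : ℝ) 1 := ⟨Real.sqrt_pos.2 hθ₀, (Real.sqrt_lt' one_pos).2 (by simpa)⟩
  have hstep := le_geometric_of_contraction hc hρ.1.le hD hdec
    (by simpa only [ρ, Real.sq_sqrt hθ₀.le] using hθ)
  obtain ⟨a, ha⟩ := cauchySeq_tendsto_of_complete (cauchySeq_of_le_geometric ρ B hρ.2 hstep)
  have hstep₀ : Tendsto (fun r => dist (x r) (x (r + 1))) atTop (𝓝 0) :=
    squeeze_zero (fun r => dist_nonneg) hstep <| by
      simpa using (tendsto_pow_atTop_nhds_zero_of_lt_one hρ.1.le hρ.2).const_mul B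
  have hdist₀ : Tendsto (fun r => infDist (x r) S) atTop (𝓝 0) :=
    squeeze_zero' (.of_forall fun r => infDist_nonneg)
      ((hstep₀.eventually (ge_mem_nhds hε)).mono hEB) (by simpa using hstep₀.const_mul τ)
  refine ⟨a, mem_closure_of_tendsto_infDist hS ha hdist₀, (B + 1) / (1 - ρ),
    div_pos (by positivity) (sub_pos.2 hρ.2), ρ, hρ, fun r => ?_⟩
  calc dist (x r) a ≤ B * ρ ^ r / (1 - ρ) := dist_le_of_le_geometric_of_tendsto ρ B hρ.2 hstep ha r
    _ ≤ (B + 1) / (1 - ρ) * ρ ^ r := by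
      rw [div_mul_eq_mul_div]
      gcongr
      · exact sub_nonneg.2 hρ.2.le
      · linarith

theorem aps_linear_convergence_general {n : ℕ}
    (X : Set (EuclideanSpace ℝ (Fin n)))
    (hXcv : Convex ℝ X)
    (f₁ f₂ : EuclideanSpace ℝ (Fin n) → ℝ)
    (hf₁ : ConvexOn ℝ univ f₁) (hf₂ : ConvexOn ℝ univ f₂)
    (g : EuclideanSpace ℝ (Fin n) → EuclideanSpace ℝ (Fin n))
    (hg : ∀ z, HasGradientAt f₂ (g z) z)
    (L : ℝ) (hL : 0 ≤ L) (hLip : ∀ z w, ‖g z - g w‖ ≤ L * ‖z - w‖)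
    (F : EuclideanSpace ℝ (Fin n) → ℝ) (hF : ∀ z, F z = f₁ z + f₂ z)
    (Xstar : Set (EuclideanSpace ℝ (Fin n)))
    (hXstar : Xstar = {y | y ∈ X ∧ ∀ z ∈ X, F y ≤ F z})
    (hXstarne : Xstar.Nonempty)
    (Fstar : ℝ) (hFstar : ∀ y ∈ Xstar, F y = Fstar)
    -- the residual map `p z = prox_{f₁}(z − ∇f₂(z))`
    (p : EuclideanSpace ℝ (Fin n) → EuclideanSpace ℝ (Fin n))
    (hp : ∀ z, IsProx f₁ X (z - g z) (p z))
    -- local error bound property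
    (hEB : ∀ ν : ℝ, sInf (F '' X) ≤ ν → ∃ δ > (0 : ℝ), ∃ τ > (0 : ℝ),
      ∀ z ∈ X, F z ≤ ν → ‖z - p z‖ ≤ δ →
        Metric.infDist z (closure Xstar) ≤ τ * ‖z - p z‖)
    (κ : ℝ) (hκ : 0 < κ)
    (α : ℕ → ℝ) (αlo : ℝ) (hαlo : 0 < αlo)
    (hα₁ : ∀ r, αlo ≤ α r)
    (x e : ℕ → EuclideanSpace ℝ (Fin n)) (hxX : ∀ r, x r ∈ X)
    (hAPS : ∀ r, IsProx (fun y => α r * f₁ y) X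
      (x r - α r • (g (x r) + e r)) (x (r + 1)))
    (herr : ∀ r, ‖e r‖ ≤ κ * ‖x (r + 1) - x r‖)
    (c₁ : ℝ) (hc₁ : 0 < c₁)
    (hdec : ∀ r, F (x r) - F (x (r + 1)) ≥ c₁ * ‖x (r + 1) - x r‖ ^ 2) :
    ∃ xstar ∈ closure Xstar, ∃ C > (0 : ℝ), ∃ ρ ∈ Set.Ioo (0 : ℝ) 1,
      ∀ r, ‖x r - xstar‖ ≤ C * ρ ^ r := by
  have hopt : ∀ z ∈ X, Fstar ≤ F z := by
    obtain ⟨y, hy⟩ := hXstarne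
    rw [hXstar] at hy
    exact fun z hz => hFstar y (hXstar ▸ hy) ▸ hy.2 z hz
  set D : ℕ → ℝ := fun r => F (x r) - Fstar
  set C := 1 + 1 / αlo + 2 * κ
  have hdecD : ∀ r, c₁ * dist (x r) (x (r + 1)) ^ 2 ≤ D r - D (r + 1) := fun r => by
    rw [dist_eq_norm']; linarith [hdec r]
  have hres : ∀ r, ‖x r - p (x r)‖ ≤ C * dist (x r) (x (r + 1)) := fun r =>
    aps_residual_le hf₁ hXcv hαlo (hα₁ r) hκ.le (hp (x r)) (hAPS r) (herr r)
  have hcost : ∀ r, D (r + 1) ≤ (1 / αlo + L + κ) * dist (x r) (x (r + 1)) *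
      (infDist (x r) Xstar + dist (x r) (x (r + 1))) := fun r =>
    le_mul_infDist_add hXstarne (by positivity) fun y hy => by
      have hFy := hFstar y hy
      rw [hXstar] at hy
      simpa only [D, hF, ← hFy] using aps_objective_sub_le hf₁ hf₂ hXcv hαlo (hα₁ r) hL hκ.le
        (hAPS r) (hg _) (hLip _ _) (herr r) hy.1
  obtain ⟨δ, hδ, τ, hτ, hEB⟩ := hEB (F (x 0))
    (csInf_le ⟨Fstar, forall_mem_image.2 hopt⟩ (mem_image_of_mem F (hxX 0)))
  have hF₀ : ∀ r, F (x r) ≤ F (x 0) := fun r => by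
    have := (antitone_nat_of_succ_le (f := D) fun r => by nlinarith [hdecD r]) (Nat.zero_le r)
    simpa [D] using this
  have hC : 0 < C := by positivity
  obtain ⟨a, ha, C', hC', ρ, hρ, hconv⟩ := exists_linear_convergence_of_local_error_bound
    hXstarne hc₁ (by positivity) (by positivity : 0 ≤ τ * C) (div_pos hδ hC)
    (fun r => sub_nonneg.2 (hopt _ (hxX r))) hdecD hcost fun r hr => by
      rw [← infDist_closure]
      calc infDist (x r) (closure Xstar) ≤ τ * ‖x r - p (x r)‖ :=
            hEB _ (hxX r) (hF₀ r) ((hres r).trans (by rwa [le_div_iff₀' hC] at hr))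
        _ ≤ τ * C * dist (x r) (x (r + 1)) := by rw [mul_assoc]; gcongr; exact hres r
  exact ⟨a, ha, C', hC', ρ, hρ, fun r => by simpa only [dist_eq_norm] using hconv r⟩

/-- R-linear convergence of APS methods under the local error bound property and the
sufficient decrease condition.  Here `p z = prox_{f₁}(z − ∇f₂(z))`, so that the
residual is `ψ(z) = ‖z − p z‖`. -/
theorem aps_linear_convergence {n : ℕ}
    (X : Set (EuclideanSpace ℝ (Fin n)))
    (hXne : X.Nonempty) (hXcl : IsClosed X) (hXcv : Convex ℝ X)
    (f₁ f₂ : EuclideanSpace ℝ (Fin n) → ℝ)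
    (hf₁ : ConvexOn ℝ univ f₁) (hf₂ : ConvexOn ℝ univ f₂)
    (g : EuclideanSpace ℝ (Fin n) → EuclideanSpace ℝ (Fin n))
    (hg : ∀ z, HasGradientAt f₂ (g z) z)
    (L : ℝ) (hL : 0 ≤ L) (hLip : ∀ z w, ‖g z - g w‖ ≤ L * ‖z - w‖)
    (F : EuclideanSpace ℝ (Fin n) → ℝ) (hF : ∀ z, F z = f₁ z + f₂ z)
    (Xstar : Set (EuclideanSpace ℝ (Fin n)))
    (hXstar : Xstar = {y | y ∈ X ∧ ∀ z ∈ X, F y ≤ F z})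
    (hXstarne : Xstar.Nonempty)
    (Fstar : ℝ) (hFstar : ∀ y ∈ Xstar, F y = Fstar)
    -- the residual map `p z = prox_{f₁}(z − ∇f₂(z))`
    (p : EuclideanSpace ℝ (Fin n) → EuclideanSpace ℝ (Fin n))
    (hp : ∀ z, IsProx f₁ X (z - g z) (p z))
    -- local error bound property
    (hEB : ∀ ν : ℝ, sInf (F '' X) ≤ ν → ∃ δ > (0 : ℝ), ∃ τ > (0 : ℝ),
      ∀ z ∈ X, F z ≤ ν → ‖z - p z‖ ≤ δ →
        Metric.infDist z (closure Xstar) ≤ τ * ‖z - p z‖)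
    (κ : ℝ) (hκ : 0 < κ)
    (α : ℕ → ℝ) (αlo αhi : ℝ) (hαlo : 0 < αlo)
    (hα₁ : ∀ r, αlo ≤ α r) (hα₂ : ∀ r, α r ≤ αhi)
    (x e : ℕ → EuclideanSpace ℝ (Fin n)) (hxX : ∀ r, x r ∈ X)
    (hAPS : ∀ r, IsProx (fun y => α r * f₁ y) X
      (x r - α r • (g (x r) + e r)) (x (r + 1)))
    (herr : ∀ r, ‖e r‖ ≤ κ * ‖x (r + 1) - x r‖)
    (c₁ : ℝ) (hc₁ : 0 < c₁)
    (hdec : ∀ r, F (x r) - F (x (r + 1)) ≥ c₁ * ‖x (r + 1) - x r‖ ^ 2) :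
    ∃ xstar ∈ closure Xstar, ∃ C > (0 : ℝ), ∃ ρ ∈ Set.Ioo (0 : ℝ) 1,
      ∀ r, ‖x r - xstar‖ ≤ C * ρ ^ r :=
  aps_linear_convergence_general X hXcv f₁ f₂ hf₁ hf₂ g hg L hL hLip F hF Xstar hXstar hXstarne
    Fstar hFstar p hp hEB κ hκ α αlo hαlo hα₁ x e hxX hAPS herr c₁ hc₁ hdec
end

section
/- Let X ⊆ ℝⁿ be a nonempty closed convex set, f₁ : ℝⁿ → ℝ convex, and f₂ : ℝⁿ → ℝ convex and differentiable. Fix x ∈ ℝⁿ and define the proximal gradient ∇̃F(x,α) = (1/α)·( x − prox_{α f₁}(x − α∇f₂(x)) ) for α > 0. Then the function α ↦ α·‖∇̃F(x,α)‖ = ‖x − prox_{α f₁}(x − α∇f₂(x))‖ is monotonically nondecreasing on (0,∞): for 0 < α₁ ≤ α₂, α₁‖∇̃F(x,α₁)‖ ≤ α₂‖∇̃F(x,α₂)‖. -/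
/-!
Writing `d = ∇f₂(x)` and expanding the square, `prox_{αf₁}(x − αd)` minimizes
`α h + ½‖· − x‖²` over `X`, with `h y = f₁ y + ⟪y − x, d⟫`. Comparing the two minimality
conditions at `α₁ < α₂` forces `h p₂ ≤ h p₁`, and then `‖p₁ − x‖ ≤ ‖p₂ − x‖`. For `α₁ = α₂`
the objective is strongly convex, so `p₁ = p₂`.
-/

open Set

lemma le_of_isMinOn_smul_add {α : Type*} {s : Set α} {h r : α → ℝ} {a₁ a₂ : ℝ} {p₁ p₂ : α}
    (ha₁ : 0 ≤ a₁) (ha : a₁ < a₂) (hp₁ : IsMinOn (fun y => a₁ * h y + r y) s p₁)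
    (hp₂ : IsMinOn (fun y => a₂ * h y + r y) s p₂) (hp₁s : p₁ ∈ s) (hp₂s : p₂ ∈ s) :
    r p₁ ≤ r p₂ := by
  have h₁ : a₁ * h p₁ + r p₁ ≤ a₁ * h p₂ + r p₂ := isMinOn_iff.1 hp₁ p₂ hp₂s
  have h₂ : a₂ * h p₂ + r p₂ ≤ a₂ * h p₁ + r p₁ := isMinOn_iff.1 hp₂ p₁ hp₁s
  -- Adding the two inequalities shows that `h` does not increase from `p₂` to `p₁`.
  have hh : h p₂ ≤ h p₁ := le_of_mul_le_mul_left (by linarith) (sub_pos.2 ha)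
  nlinarith

variable {E : Type*} [NormedAddCommGroup E] [InnerProductSpace ℝ E]

lemma strongConvexOn_half_norm_sub_sq {s : Set E} (hs : Convex ℝ s) (z : E) :
    StrongConvexOn s 1 fun y => 1 / 2 * ‖y - z‖ ^ 2 := by
  rw [strongConvexOn_iff_convex]
  have hlin : ConvexOn ℝ s fun y => 1 / 2 * ‖z‖ ^ 2 + innerSL ℝ (-z) y :=
    (convexOn_const _ hs).add ((innerSL ℝ (-z)).toLinearMap.convexOn hs)
  refine hlin.congr fun y _ => ?_
  simp only [innerSL_apply_apply, inner_neg_left, norm_sub_sq_real, real_inner_comm]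
  ring

namespace IsProx

variable {φ : E → ℝ} {X : Set E} {x p q : E}

lemma isMinOn (hp : IsProx φ X x p) : IsMinOn (fun y => φ y + 1 / 2 * ‖y - x‖ ^ 2) X p :=
  isMinOn_iff.2 hp.2

lemma unique (hφ : ConvexOn ℝ X φ) (hp : IsProx φ X x p) (hq : IsProx φ X x q) : p = q := by
  have hstrict : StrictConvexOn ℝ X fun y => φ y + 1 / 2 * ‖y - x‖ ^ 2 :=
    hφ.add_strictConvexOn ((strongConvexOn_half_norm_sub_sq hφ.1 x).strictConvexOn one_pos)
  exact hstrict.eq_of_isMinOn hp.isMinOn hq.isMinOn hp.1 hq.1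

lemma isMinOn_forward_step {f : E → ℝ} {α : ℝ} {d : E}
    (hp : IsProx (fun y => α * f y) X (x - α • d) p) :
    IsMinOn (fun y => α * (f y + inner ℝ (y - x) d) + 1 / 2 * ‖y - x‖ ^ 2) X p := by
  have expand : ∀ y, α * f y + 1 / 2 * ‖y - (x - α • d)‖ ^ 2
      = α * (f y + inner ℝ (y - x) d) + 1 / 2 * ‖y - x‖ ^ 2 + α ^ 2 / 2 * ‖d‖ ^ 2 := fun y => by
    rw [sub_sub_eq_add_sub, add_sub_right_comm, norm_add_sq_real, norm_smul,
      real_inner_smul_right, mul_pow, Real.norm_eq_abs, sq_abs]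
    ring
  refine isMinOn_iff.2 fun y hy => ?_
  have := hp.2 y hy
  simp only [expand] at this
  linarith

end IsProx

theorem scaled_proximal_gradient_norm_monotone_general {n : ℕ}
    (X : Set (EuclideanSpace ℝ (Fin n)))
    (hXcv : Convex ℝ X)
    (f₁ : EuclideanSpace ℝ (Fin n) → ℝ)
    (hf₁ : ConvexOn ℝ univ f₁)
    (g : EuclideanSpace ℝ (Fin n) → EuclideanSpace ℝ (Fin n))
    (x : EuclideanSpace ℝ (Fin n))
    (α₁ α₂ : ℝ) (hα₁ : 0 < α₁) (hα₁₂ : α₁ ≤ α₂)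
    (p₁ p₂ : EuclideanSpace ℝ (Fin n))
    (hp₁ : IsProx (fun y => α₁ * f₁ y) X (x - α₁ • g x) p₁)
    (hp₂ : IsProx (fun y => α₂ * f₁ y) X (x - α₂ • g x) p₂) :
    ‖x - p₁‖ ≤ ‖x - p₂‖ := by
  rw [norm_sub_rev x p₁, norm_sub_rev x p₂]
  rcases hα₁₂.eq_or_lt with rfl | hlt
  · have hconv : ConvexOn ℝ X fun y => α₁ * f₁ y := (hf₁.subset (subset_univ X) hXcv).smul hα₁.le
    rw [hp₁.unique hconv hp₂]
  · have hsq : 1 / 2 * ‖p₁ - x‖ ^ 2 ≤ 1 / 2 * ‖p₂ - x‖ ^ 2 :=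
      le_of_isMinOn_smul_add (r := fun y => 1 / 2 * ‖y - x‖ ^ 2) hα₁.le hlt
        hp₁.isMinOn_forward_step hp₂.isMinOn_forward_step hp₁.1 hp₂.1
    exact (pow_le_pow_iff_left₀ (norm_nonneg _) (norm_nonneg _) two_ne_zero).1 (by linarith)

/-- The map `α ↦ α‖∇̃F(x,α)‖ = ‖x − prox_{αf₁}(x − α∇f₂(x))‖` is monotonically
nondecreasing in `α > 0`.  Here `p₁ = prox_{α₁f₁}(x − α₁∇f₂(x))` and
`p₂ = prox_{α₂f₁}(x − α₂∇f₂(x))`. -/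
theorem scaled_proximal_gradient_norm_monotone {n : ℕ}
    (X : Set (EuclideanSpace ℝ (Fin n)))
    (hXne : X.Nonempty) (hXcl : IsClosed X) (hXcv : Convex ℝ X)
    (f₁ f₂ : EuclideanSpace ℝ (Fin n) → ℝ)
    (hf₁ : ConvexOn ℝ univ f₁) (hf₂ : ConvexOn ℝ univ f₂)
    (g : EuclideanSpace ℝ (Fin n) → EuclideanSpace ℝ (Fin n))
    (hg : ∀ z, HasGradientAt f₂ (g z) z)
    (x : EuclideanSpace ℝ (Fin n))
    (α₁ α₂ : ℝ) (hα₁ : 0 < α₁) (hα₁₂ : α₁ ≤ α₂)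
    (p₁ p₂ : EuclideanSpace ℝ (Fin n))
    (hp₁ : IsProx (fun y => α₁ * f₁ y) X (x - α₁ • g x) p₁)
    (hp₂ : IsProx (fun y => α₂ * f₁ y) X (x - α₂ • g x) p₂) :
    ‖x - p₁‖ ≤ ‖x - p₂‖ :=
  scaled_proximal_gradient_norm_monotone_general X hXcv f₁ hf₁ g x α₁ α₂ hα₁ hα₁₂ p₁ p₂ hp₁ hp₂
end

section
/- Let X ⊆ ℝⁿ be a nonempty closed convex set, f₁ : ℝⁿ → ℝ convex, and f₂ : ℝⁿ → ℝ convex and differentiable. Fix x ∈ ℝⁿ and define the proximal gradient ∇̃F(x,α) = (1/α)·( x − prox_{α f₁}(x − α∇f₂(x)) ) for α > 0. Then the function α ↦ ‖∇̃F(x,α)‖ is monotonically nonincreasing on (0,∞): for 0 < α₁ ≤ α₂, ‖∇̃F(x,α₂)‖ ≤ ‖∇̃F(x,α₁)‖. -/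
open Set RealInnerProductSpace

lemma prox_var_ineq {n : ℕ} (X : Set (EuclideanSpace ℝ (Fin n))) (hXcv : Convex ℝ X)
    (f₁ : EuclideanSpace ℝ (Fin n) → ℝ) (hf₁ : ConvexOn ℝ univ f₁)
    (α : ℝ) (hα : 0 ≤ α) (z p : EuclideanSpace ℝ (Fin n))
    (hp : IsProx (fun y => α * f₁ y) X z p) :
    ∀ y ∈ X, (⟪z - p, y - p⟫ : ℝ) ≤ α * f₁ y - α * f₁ p := by
  intro y hy
  obtain ⟨hpX, hmin⟩ := hp
  have key : ∀ t : ℝ, 0 < t → t ≤ 1 →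
      0 ≤ (α * f₁ y - α * f₁ p + ⟪p - z, y - p⟫) + t / 2 * ‖y - p‖ ^ 2 := by
    intro t ht ht1
    have hyt : p + t • (y - p) ∈ X := by
      have h := hXcv hpX hy (by linarith : (0:ℝ) ≤ 1 - t) ht.le (by ring)
      convert h using 1
      module
    have h1 := hmin _ hyt
    have hconv : f₁ (p + t • (y - p)) ≤ (1 - t) * f₁ p + t * f₁ y := by
      have h := hf₁.2 (mem_univ p) (mem_univ y) (by linarith : (0:ℝ) ≤ 1 - t) ht.le (by ring)
      have : (1 - t) • p + t • y = p + t • (y - p) := by module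
      rw [this] at h
      simpa using h
    have hexp : ‖p + t • (y - p) - z‖ ^ 2
        = ‖p - z‖ ^ 2 + 2 * (t * ⟪p - z, y - p⟫) + t ^ 2 * ‖y - p‖ ^ 2 := by
      have : p + t • (y - p) - z = (p - z) + t • (y - p) := by module
      rw [this, norm_add_sq_real, real_inner_smul_right, norm_smul]
      simp [abs_of_pos ht]
      ring
    simp only at h1
    nlinarith [h1, hexp, mul_le_mul_of_nonneg_left hconv hα,
      mul_nonneg (mul_nonneg ht.le (by linarith : (0:ℝ) ≤ 1 - t)) (sq_nonneg ‖y - p‖), ht]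
  by_contra hcon
  push_neg at hcon
  set c := α * f₁ y - α * f₁ p + ⟪p - z, y - p⟫ with hc
  have hc0 : c < 0 := by
    have : (⟪z - p, y - p⟫ : ℝ) = -⟪p - z, y - p⟫ := by
      rw [← inner_neg_left]; congr 1; module
    linarith [this ▸ hcon]
  set d := ‖y - p‖ ^ 2 with hd
  have hd0 : 0 ≤ d := sq_nonneg _
  rcases eq_or_lt_of_le hd0 with hdz | hdp
  · have := key 1 one_pos le_rfl
    rw [← hdz] at this
    linarith
  · have ht' : 0 < min 1 (-c / d) := lt_min one_pos (div_pos (by linarith) hdp)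
    have := key _ ht' (min_le_left _ _)
    have h2 : min 1 (-c / d) / 2 * d ≤ (-c / d) / 2 * d := by
      have hh : min 1 (-c / d) / 2 ≤ (-c / d) / 2 := by
        linarith [min_le_right 1 (-c / d)]
      exact mul_le_mul_of_nonneg_right hh hd0
    have h3 : (-c / d) / 2 * d = -c / 2 := by
      field_simp
    linarith


/-- The map `α ↦ ‖∇̃F(x,α)‖ = (1/α)‖x − prox_{αf₁}(x − α∇f₂(x))‖` is monotonically
nonincreasing in `α > 0`.  Here `p₁ = prox_{α₁f₁}(x − α₁∇f₂(x))` and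
`p₂ = prox_{α₂f₁}(x − α₂∇f₂(x))`. -/
theorem proximal_gradient_norm_antitone {n : ℕ}
    (X : Set (EuclideanSpace ℝ (Fin n)))
    (hXne : X.Nonempty) (hXcl : IsClosed X) (hXcv : Convex ℝ X)
    (f₁ f₂ : EuclideanSpace ℝ (Fin n) → ℝ)
    (hf₁ : ConvexOn ℝ univ f₁) (hf₂ : ConvexOn ℝ univ f₂)
    (g : EuclideanSpace ℝ (Fin n) → EuclideanSpace ℝ (Fin n))
    (hg : ∀ z, HasGradientAt f₂ (g z) z)
    (x : EuclideanSpace ℝ (Fin n))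
    (α₁ α₂ : ℝ) (hα₁ : 0 < α₁) (hα₁₂ : α₁ ≤ α₂)
    (p₁ p₂ : EuclideanSpace ℝ (Fin n))
    (hp₁ : IsProx (fun y => α₁ * f₁ y) X (x - α₁ • g x) p₁)
    (hp₂ : IsProx (fun y => α₂ * f₁ y) X (x - α₂ • g x) p₂) :
    (1 / α₂) * ‖x - p₂‖ ≤ (1 / α₁) * ‖x - p₁‖ := by
  have hα₂ : 0 < α₂ := lt_of_lt_of_le hα₁ hα₁₂
  have hI₁ := prox_var_ineq X hXcv f₁ hf₁ α₁ hα₁.le _ p₁ hp₁ p₂ hp₂.1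
  have hI₂ := prox_var_ineq X hXcv f₁ hf₁ α₂ hα₂.le _ p₂ hp₂ p₁ hp₁.1
  have q₁ : (⟪x - α₁ • g x - p₁, p₂ - p₁⟫ : ℝ)
      = ⟪x - p₁, x - p₁⟫ - ⟪x - p₁, x - p₂⟫ - α₁ * (⟪g x, x - p₁⟫ - ⟪g x, x - p₂⟫) := by
    have e₁ : x - α₁ • g x - p₁ = (x - p₁) - α₁ • g x := by module
    have e₂ : p₂ - p₁ = (x - p₁) - (x - p₂) := by module
    rw [e₁, e₂]
    simp only [inner_sub_left, inner_sub_right, real_inner_smul_left]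
    ring
  have q₂ : (⟪x - α₂ • g x - p₂, p₁ - p₂⟫ : ℝ)
      = ⟪x - p₂, x - p₂⟫ - ⟪x - p₂, x - p₁⟫ + α₂ * (⟪g x, x - p₁⟫ - ⟪g x, x - p₂⟫) := by
    have e₃ : x - α₂ • g x - p₂ = (x - p₂) - α₂ • g x := by module
    have e₄ : p₁ - p₂ = (x - p₂) - (x - p₁) := by module
    rw [e₃, e₄]
    simp only [inner_sub_left, inner_sub_right, real_inner_smul_left]
    ring
  rw [q₁] at hI₁
  rw [q₂] at hI₂
  rw [real_inner_comm (x - p₁) (x - p₂)] at hI₂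
  rw [real_inner_self_eq_norm_sq] at hI₁
  rw [real_inner_self_eq_norm_sq] at hI₂
  set A := ‖x - p₁‖ with hA
  set B := ‖x - p₂‖ with hB
  set P : ℝ := ⟪x - p₁, x - p₂⟫ with hPdef
  have hA0 : 0 ≤ A := norm_nonneg _
  have hB0 : 0 ≤ B := norm_nonneg _
  have hP : P ≤ A * B := real_inner_le_norm _ _
  have hsum : α₂ * A ^ 2 + α₁ * B ^ 2 ≤ (α₁ + α₂) * P := by
    nlinarith [mul_le_mul_of_nonneg_left hI₁ hα₂.le, mul_le_mul_of_nonneg_left hI₂ hα₁.le]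
  have hsum' : α₂ * A ^ 2 + α₁ * B ^ 2 ≤ (α₁ + α₂) * (A * B) := by
    nlinarith [mul_le_mul_of_nonneg_left hP (by linarith : (0:ℝ) ≤ α₁ + α₂)]
  have hgoal' : α₁ * B ≤ α₂ * A := by
    by_contra hcontra
    push_neg at hcontra
    have hAB : A < B := by nlinarith [mul_le_mul_of_nonneg_right hα₁₂ hA0]
    have hpos : 0 < (B - A) * (α₁ * B - α₂ * A) := mul_pos (by linarith) (by linarith)
    nlinarith [hpos, hsum']
  rw [div_mul_eq_mul_div, div_mul_eq_mul_div, div_le_div_iff₀ hα₂ hα₁]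
  nlinarith [hgoal']
end

section
/- Let E be a real inner product space, g : E → ℝ a convex function, and 0 < α₁ < α₂. Suppose u₁, u₂ ∈ E are such that −u₁ is a subgradient of g at the point α₁u₁ and −u₂ is a subgradient of g at the point α₂u₂. Then ‖u₂‖ ≤ ‖u₁‖. -/
open RealInnerProductSpace

/-- If `−u₁` is a subgradient of the convex function `g` at `α₁u₁` and `−u₂` is a
subgradient of `g` at `α₂u₂`, with `0 < α₁ < α₂`, then `‖u₂‖ ≤ ‖u₁‖`. -/
theorem norm_subgradient_fixed_point_antitone {E : Type*} [NormedAddCommGroup E]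
    [InnerProductSpace ℝ E]
    (g : E → ℝ) (hg : ConvexOn ℝ Set.univ g)
    (α₁ α₂ : ℝ) (hα₁ : 0 < α₁) (hα₁₂ : α₁ < α₂)
    (u₁ u₂ : E)
    (hsub₁ : ∀ y, g y ≥ g (α₁ • u₁) + ⟪-u₁, y - α₁ • u₁⟫)
    (hsub₂ : ∀ y, g y ≥ g (α₂ • u₂) + ⟪-u₂, y - α₂ • u₂⟫) :
    ‖u₂‖ ≤ ‖u₁‖ := by
  have h1 := hsub₁ (α₂ • u₂)
  have h2 := hsub₂ (α₁ • u₁)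
  simp only [inner_sub_right, inner_smul_right, inner_neg_left,
    real_inner_self_eq_norm_sq] at h1 h2
  have hc : ⟪u₁, u₂⟫ ≤ ‖u₁‖ * ‖u₂‖ := real_inner_le_norm u₁ u₂
  have hsym : ⟪u₂, u₁⟫ = ⟪u₁, u₂⟫ := real_inner_comm u₁ u₂
  by_contra h
  push_neg at h
  have hp : 0 < α₂ * ‖u₂‖ - α₁ * ‖u₁‖ := by nlinarith [norm_nonneg u₁]
  nlinarith [mul_pos (sub_pos.mpr h) hp]
end

section
/- Let X ⊆ ℝⁿ be a nonempty closed convex set, f₁ : ℝⁿ → ℝ convex, f₂ : ℝⁿ → ℝ convex and differentiable, F = f₁ + f₂, and α > 0. Then a point x̄ ∈ X minimizes F over X if and only if x̄ = prox_{α f₁}( x̄ − α∇f₂(x̄) ), i.e. the minimizers of F over X are exactly the fixed points of the proximal splitting map. -/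
/-!
Both sides are first-order optimality conditions for a convex function plus a differentiable
convex one: `x̄` minimizes `φ + ψ` over `X` iff `0 ≤ φ y - φ x̄ + ⟪∇ψ(x̄), y - x̄⟫` for all `y ∈ X`.
For `F` this is `φ = f₁`, `ψ = f₂`; the prox point minimizes `α f₁ + ½‖· - (x̄ - α∇f₂(x̄))‖²`,
whose quadratic part has gradient `α∇f₂(x̄)` at `x̄`, giving `α` times the same inequality.
-/

open Set AffineMap
open scoped RealInnerProductSpace

section

variable {E : Type*} [NormedAddCommGroup E] [InnerProductSpace ℝ E]
  {s : Set E} {φ ψ : E → ℝ} {p y G : E}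

lemma ConvexOn.apply_lineMap_le (hφ : ConvexOn ℝ s φ)
    (hp : p ∈ s) (hy : y ∈ s) {t : ℝ} (ht : t ∈ Icc (0 : ℝ) 1) :
    φ (lineMap p y t) ≤ φ p + t * (φ y - φ p) := by
  have h := hφ.2 hp hy (sub_nonneg.2 ht.2) ht.1 (sub_add_cancel 1 t)
  rw [lineMap_apply_module]
  simp only [smul_eq_mul] at h
  linarith

lemma inner_sub_le_half_norm_sub_sq_sub (x p y : E) :
    ⟪p - x, y - p⟫ ≤ 1 / 2 * ‖y - x‖ ^ 2 - 1 / 2 * ‖p - x‖ ^ 2 := by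
  have h : ‖y - x‖ ^ 2 = ‖y - p‖ ^ 2 + 2 * ⟪y - p, p - x⟫ + ‖p - x‖ ^ 2 := by
    rw [← norm_add_sq_real, sub_add_sub_cancel]
  rw [h, real_inner_comm]
  nlinarith [sq_nonneg ‖y - p‖]

variable [CompleteSpace E]

lemma HasGradientAt.hasDerivAt_comp_lineMap (hψ : HasGradientAt ψ G p) (y : E) :
    HasDerivAt (fun t : ℝ => ψ (lineMap p y t)) ⟪G, y - p⟫ 0 := by
  have h := (hasGradientAt_iff_hasFDerivAt.1 hψ).comp_hasDerivAt_of_eq 0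
    (hasDerivAt_lineMap (a := p) (b := y)) (lineMap_apply_zero p y).symm
  simp only [InnerProductSpace.toDual_apply_apply] at h
  exact h

lemma ConvexOn.inner_le_sub_of_hasGradientAt_s15 (hψ : ConvexOn ℝ s ψ) (hG : HasGradientAt ψ G p)
    (hp : p ∈ s) (hy : y ∈ s) : ⟪G, y - p⟫ ≤ ψ y - ψ p := by
  have h := (hψ.comp_affineMap (lineMap p y)).le_slope_of_hasDerivAt (x := 0) (y := 1)
    (by simpa) (by simpa) zero_lt_one (hG.hasDerivAt_comp_lineMap y)
  simpa [slope_def_field] using h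

lemma hasGradientAt_half_norm_sub_sq (x p : E) :
    HasGradientAt (fun y => 1 / 2 * ‖y - x‖ ^ 2) (p - x) p := by
  rw [hasGradientAt_iff_hasFDerivAt]
  refine ((((hasFDerivAt_id (𝕜 := ℝ) p).sub_const x).norm_sq).const_mul (1 / 2)).congr_fderiv ?_
  ext v
  simp

/-- Restricted to the segment from `p` to `y`, `φ` lies below its chord, so
`t ↦ t (φ y - φ p) + ψ (lineMap p y t)` is still minimal on `[0, 1]` at `t = 0`. -/
lemma IsMinOn.sub_add_inner_nonneg (hmin : IsMinOn (φ + ψ) s p) (hφ : ConvexOn ℝ s φ)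
    (hG : HasGradientAt ψ G p) (hp : p ∈ s) (hy : y ∈ s) :
    0 ≤ φ y - φ p + ⟪G, y - p⟫ := by
  set k : ℝ → ℝ := fun t => t * (φ y - φ p) + ψ (lineMap p y t)
  have hk : IsMinOn k (Icc 0 1) 0 := isMinOn_iff.2 fun t ht => by
    have hmin_t := isMinOn_iff.1 hmin _ (hφ.1.lineMap_mem hp hy ht)
    have hchord := hφ.apply_lineMap_le hp hy ht
    simp only [Pi.add_apply] at hmin_t
    simp only [k, zero_mul, zero_add, lineMap_apply_zero]
    linarith
  have hk' : HasDerivAt k (φ y - φ p + ⟪G, y - p⟫) 0 := by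
    have h := ((hasDerivAt_id (0 : ℝ)).mul_const (φ y - φ p)).add (hG.hasDerivAt_comp_lineMap y)
    simp only [one_mul] at h
    exact h
  have hcone : (1 : ℝ) - 0 ∈ posTangentConeAt (Icc (0 : ℝ) 1) 0 :=
    sub_mem_posTangentConeAt_of_segment_subset (segment_eq_Icc zero_le_one).subset
  simpa using hk.localize.hasFDerivWithinAt_nonneg hk'.hasFDerivAt.hasFDerivWithinAt hcone

theorem isMinOn_add_iff_forall_inner_nonneg (hφ : ConvexOn ℝ s φ) (hG : HasGradientAt ψ G p)
    (hψ : ∀ y ∈ s, ⟪G, y - p⟫ ≤ ψ y - ψ p) (hp : p ∈ s) :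
    IsMinOn (φ + ψ) s p ↔ ∀ y ∈ s, 0 ≤ φ y - φ p + ⟪G, y - p⟫ := by
  refine ⟨fun hmin y hy => hmin.sub_add_inner_nonneg hφ hG hp hy, fun h => ?_⟩
  refine isMinOn_iff.2 fun y hy => ?_
  simp only [Pi.add_apply]
  linarith [h y hy, hψ y hy]

theorem isProx_iff_forall_inner_nonneg {X : Set E} {x : E} (hφ : ConvexOn ℝ X φ) :
    IsProx φ X x p ↔ p ∈ X ∧ ∀ y ∈ X, 0 ≤ φ y - φ p + ⟪p - x, y - p⟫ := by
  refine and_congr_right fun hp => ?_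
  rw [← isMinOn_add_iff_forall_inner_nonneg hφ (hasGradientAt_half_norm_sub_sq x p)
    (fun y _ => inner_sub_le_half_norm_sub_sq_sub x p y) hp, isMinOn_iff]
  rfl

end

theorem minimizer_iff_prox_fixed_point_general {n : ℕ}
    (X : Set (EuclideanSpace ℝ (Fin n)))
    (hXcv : Convex ℝ X)
    (f₁ f₂ : EuclideanSpace ℝ (Fin n) → ℝ)
    (hf₁ : ConvexOn ℝ univ f₁) (hf₂ : ConvexOn ℝ univ f₂)
    (g : EuclideanSpace ℝ (Fin n) → EuclideanSpace ℝ (Fin n))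
    (hg : ∀ z, HasGradientAt f₂ (g z) z)
    (F : EuclideanSpace ℝ (Fin n) → ℝ) (hF : ∀ z, F z = f₁ z + f₂ z)
    (α : ℝ) (hα : 0 < α)
    (xbar : EuclideanSpace ℝ (Fin n)) (hxbar : xbar ∈ X) :
    (∀ y ∈ X, F xbar ≤ F y) ↔
      IsProx (fun y => α * f₁ y) X (xbar - α • g xbar) xbar := by
  have hf₁X : ConvexOn ℝ X f₁ := hf₁.subset (subset_univ X) hXcv
  have hF_min : (∀ y ∈ X, F xbar ≤ F y) ↔ IsMinOn (f₁ + f₂) X xbar := by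
    simp only [isMinOn_iff, hF, Pi.add_apply]
  rw [hF_min, isMinOn_add_iff_forall_inner_nonneg hf₁X (hg xbar)
      (fun y _ => hf₂.inner_le_sub_of_hasGradientAt_s15 (hg xbar) (mem_univ xbar) (mem_univ y)) hxbar,
    isProx_iff_forall_inner_nonneg (φ := fun y => α * f₁ y) (hf₁X.smul hα.le),
    and_iff_right hxbar, sub_sub_cancel]
  refine forall₂_congr fun y _ => ?_
  rw [real_inner_smul_left, ← mul_nonneg_iff_of_pos_left hα]
  ring_nf

/-- A point `x̄ ∈ X` minimizes `F = f₁ + f₂` over `X` if and only if it is a fixed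
point of the proximal splitting map, i.e. `x̄ = prox_{αf₁}(x̄ − α∇f₂(x̄))`. -/
theorem minimizer_iff_prox_fixed_point {n : ℕ}
    (X : Set (EuclideanSpace ℝ (Fin n)))
    (hXne : X.Nonempty) (hXcl : IsClosed X) (hXcv : Convex ℝ X)
    (f₁ f₂ : EuclideanSpace ℝ (Fin n) → ℝ)
    (hf₁ : ConvexOn ℝ univ f₁) (hf₂ : ConvexOn ℝ univ f₂)
    (g : EuclideanSpace ℝ (Fin n) → EuclideanSpace ℝ (Fin n))
    (hg : ∀ z, HasGradientAt f₂ (g z) z)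
    (F : EuclideanSpace ℝ (Fin n) → ℝ) (hF : ∀ z, F z = f₁ z + f₂ z)
    (α : ℝ) (hα : 0 < α)
    (xbar : EuclideanSpace ℝ (Fin n)) (hxbar : xbar ∈ X) :
    (∀ y ∈ X, F xbar ≤ F y) ↔
      IsProx (fun y => α * f₁ y) X (xbar - α • g xbar) xbar :=
  minimizer_iff_prox_fixed_point_general X hXcv f₁ f₂ hf₁ hf₂ g hg F hF α hα xbar hxbar
end

section
/- Let X ⊆ ℝⁿ be a nonempty closed convex set, f₁ : ℝⁿ → ℝ convex, f₂ : ℝⁿ → ℝ convex and differentiable. Let α ≥ α̲ > 0, κ ≥ 0, x ∈ X, e ∈ ℝⁿ, and set x⁺ = prox_{α f₁}( x − α(∇f₂(x) + e) ) with ‖e‖ ≤ κ‖x⁺ − x‖. Then the unit-stepsize residual satisfies ψ(x) = ‖ x − prox_{f₁}( x − ∇f₂(x) ) ‖ ≤ ( (1 + ακ) / min{1, α̲} )·‖x − x⁺‖. -/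
open Set RealInnerProductSpace Metric

lemma isProx_vi {E : Type*} [NormedAddCommGroup E] [InnerProductSpace ℝ E]
    {φ : E → ℝ} {X : Set E} {w p : E} (hφ : ConvexOn ℝ univ φ) (hX : Convex ℝ X)
    (hp : IsProx φ X w p) : ∀ y ∈ X, ⟪w - p, y - p⟫ ≤ φ y - φ p := by
  intro y hy
  set N : ℝ := ‖y - p‖ ^ 2 with hNdef
  have hN : 0 ≤ N := by positivity
  refine le_of_forall_pos_le_add fun ε hε => ?_
  set t : ℝ := min 1 (2 * ε / (N + 1)) with htdef
  have ht0 : 0 < t := lt_min one_pos (by positivity)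
  have ht1 : t ≤ 1 := min_le_left _ _
  have htle : t * (N + 1) ≤ 2 * ε := by
    rw [← le_div_iff₀ (by positivity)]
    exact min_le_right _ _
  set yt : E := p + t • (y - p) with hytdef
  have hytX : yt ∈ X := by
    have h := hX hp.1 hy (by linarith : (0:ℝ) ≤ 1 - t) ht0.le (by ring)
    have he : (1 - t) • p + t • y = yt := by
      rw [hytdef, smul_sub, sub_smul, one_smul]; abel
    rwa [he] at h
  have hφt : φ yt ≤ (1 - t) * φ p + t * φ y := by
    have h := hφ.2 (mem_univ p) (mem_univ y) (by linarith : (0:ℝ) ≤ 1 - t) ht0.le (by ring)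
    have he : (1 - t) • p + t • y = yt := by
      rw [hytdef, smul_sub, sub_smul, one_smul]; abel
    rwa [he, smul_eq_mul, smul_eq_mul] at h
  have hmin := hp.2 yt hytX
  have hnorm : ‖yt - w‖ ^ 2 = ‖p - w‖ ^ 2 + 2 * t * ⟪p - w, y - p⟫ + t ^ 2 * N := by
    have he : yt - w = (p - w) + t • (y - p) := by rw [hytdef]; abel
    rw [he, norm_add_sq_real, real_inner_smul_right, norm_smul, Real.norm_eq_abs,
      abs_of_pos ht0, mul_pow, hNdef]
    ring
  rw [hnorm] at hmin
  have h3 : 0 ≤ t * ((φ y - φ p - ⟪w - p, y - p⟫) + t * (N / 2)) := by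
    have hip : ⟪w - p, y - p⟫ = -⟪p - w, y - p⟫ := by
      rw [show w - p = -(p - w) by abel, inner_neg_left]
    rw [hip]; nlinarith [hmin, hφt]
  have h4 : 0 ≤ (φ y - φ p - ⟪w - p, y - p⟫) + t * (N / 2) := nonneg_of_mul_nonneg_right h3 ht0
  nlinarith [h4, htle, hN, ht0]

lemma exists_isProx {n : ℕ} {φ : EuclideanSpace ℝ (Fin n) → ℝ}
    (hφ : ConvexOn ℝ univ φ) {X : Set (EuclideanSpace ℝ (Fin n))}
    (hXne : X.Nonempty) (hXcl : IsClosed X) (w : EuclideanSpace ℝ (Fin n)) :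
    ∃ p, IsProx φ X w p := by
  obtain ⟨x₀, hx₀⟩ := hXne
  have hcont : Continuous φ :=
    continuousOn_univ.mp (hφ.continuousOn isOpen_univ)
  set h : EuclideanSpace ℝ (Fin n) → ℝ := fun y => φ y + (1 / 2) * ‖y - w‖ ^ 2 with hhdef
  have hhcont : Continuous h := by fun_prop
  -- bound on the unit ball around x₀
  obtain ⟨C, hC⟩ : ∃ C, ∀ z ∈ closedBall x₀ 1, ‖φ z‖ ≤ C :=
    (isCompact_closedBall x₀ 1).exists_bound_of_continuousOn hcont.continuousOn
  -- radial lower bound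
  have hlb : ∀ y, 1 ≤ ‖y - x₀‖ → φ x₀ - (C + |φ x₀|) * ‖y - x₀‖ ≤ φ y := by
    intro y hy
    set r : ℝ := ‖y - x₀‖ with hrdef
    have hr0 : (0:ℝ) < r := lt_of_lt_of_le one_pos hy
    have hri : r * r⁻¹ = 1 := mul_inv_cancel₀ hr0.ne'
    have hrinv1 : r⁻¹ ≤ 1 := by
      rw [inv_le_one_iff₀]; right; exact hy
    set z : EuclideanSpace ℝ (Fin n) := x₀ + r⁻¹ • (y - x₀) with hzdef
    have hz : z ∈ closedBall x₀ 1 := by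
      rw [mem_closedBall, dist_eq_norm]
      have : z - x₀ = r⁻¹ • (y - x₀) := by rw [hzdef]; abel
      rw [this, norm_smul, Real.norm_eq_abs, abs_of_pos (by positivity)]
      rw [← hrdef, inv_mul_cancel₀ hr0.ne']
    have hcomb : φ z ≤ (1 - r⁻¹) * φ x₀ + r⁻¹ * φ y := by
      have h0 := hφ.2 (mem_univ x₀) (mem_univ y) (show (0:ℝ) ≤ 1 - r⁻¹ by linarith)
        (show (0:ℝ) ≤ r⁻¹ by positivity) (show 1 - r⁻¹ + r⁻¹ = 1 by ring)
      have he : (1 - r⁻¹) • x₀ + r⁻¹ • y = z := by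
        rw [hzdef, smul_sub, sub_smul, one_smul]; abel
      rwa [he, smul_eq_mul, smul_eq_mul] at h0
    have hφz : -C ≤ φ z := by
      have := hC z hz; rw [Real.norm_eq_abs] at this
      linarith [abs_le.mp this |>.1]
    have key : r * φ z ≤ (r - 1) * φ x₀ + φ y := by
      calc r * φ z ≤ r * ((1 - r⁻¹) * φ x₀ + r⁻¹ * φ y) :=
            mul_le_mul_of_nonneg_left hcomb hr0.le
        _ = (r - r * r⁻¹) * φ x₀ + (r * r⁻¹) * φ y := by ring
        _ = (r - 1) * φ x₀ + φ y := by rw [hri]; ring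
    nlinarith [mul_le_mul_of_nonneg_left hφz hr0.le,
      mul_le_mul_of_nonneg_left (le_abs_self (φ x₀)) hr0.le]
  -- coercivity outside a large ball
  set d : ℝ := ‖x₀ - w‖ with hddef
  set D : ℝ := C + |φ x₀| with hDdef
  have hD0 : 0 ≤ D := by
    have := hC x₀ (mem_closedBall_self zero_le_one)
    rw [Real.norm_eq_abs] at this
    show 0 ≤ C + |φ x₀|
    linarith [abs_nonneg (φ x₀), (abs_le.mp this).2, le_abs_self (φ x₀)]
  set R : ℝ := max 1 (2 * (d + D)) with hRdef
  have claim : ∀ y ∉ closedBall x₀ R, h x₀ ≤ h y := by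
    intro y hy
    rw [mem_closedBall, not_le, dist_eq_norm] at hy
    set r : ℝ := ‖y - x₀‖ with hrdef
    have hr1 : 1 ≤ r := le_trans (le_max_left _ _) hy.le
    have hrD : 2 * (d + D) ≤ r := le_trans (le_max_right _ _) hy.le
    have hd0 : 0 ≤ d := norm_nonneg _
    have hlb' := hlb y hr1
    have htri : r ≤ ‖y - w‖ + d := by
      have : y - x₀ = (y - w) + (w - x₀) := by abel
      calc r = ‖(y - w) + (w - x₀)‖ := by rw [hrdef, this]
        _ ≤ ‖y - w‖ + ‖w - x₀‖ := norm_add_le _ _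
        _ = ‖y - w‖ + d := by rw [norm_sub_rev w x₀]
    have hsq : (r - d) ^ 2 ≤ ‖y - w‖ ^ 2 := by
      have h1 : 0 ≤ r - d := by linarith
      have h2 : r - d ≤ ‖y - w‖ := by linarith
      nlinarith [norm_nonneg (y - w)]
    have hx0w : h x₀ = φ x₀ + (1/2) * d ^ 2 := by rw [hhdef]
    rw [hx0w, hhdef]
    simp only
    nlinarith [hsq, hlb', hrD, hd0, hD0, hr1]
  have ev : ∀ᶠ y in Filter.cocompact (EuclideanSpace ℝ (Fin n)), h x₀ ≤ h y :=
    Filter.hasBasis_cocompact.eventually_iff.2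
      ⟨closedBall x₀ R, isCompact_closedBall _ _, fun y hy => claim y hy⟩
  obtain ⟨p, hpX, hpmin⟩ := hhcont.continuousOn.exists_isMinOn' hXcl hx₀
    (ev.filter_mono inf_le_left)
  exact ⟨p, hpX, fun y hy => hpmin hy⟩

/-- If `x⁺ = prox_{αf₁}(x − α(∇f₂(x) + e))` with `‖e‖ ≤ κ‖x⁺ − x‖` and `α ≥ α̲ > 0`,
then the unit-stepsize residual `ψ(x) = ‖x − prox_{f₁}(x − ∇f₂(x))‖` satisfies
`ψ(x) ≤ ((1 + ακ)/min{1, α̲})‖x − x⁺‖`.  Here `q = prox_{f₁}(x − ∇f₂(x))`. -/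
theorem unit_residual_le_inexact_step {n : ℕ}
    (X : Set (EuclideanSpace ℝ (Fin n)))
    (hXne : X.Nonempty) (hXcl : IsClosed X) (hXcv : Convex ℝ X)
    (f₁ f₂ : EuclideanSpace ℝ (Fin n) → ℝ)
    (hf₁ : ConvexOn ℝ univ f₁) (hf₂ : ConvexOn ℝ univ f₂)
    (g : EuclideanSpace ℝ (Fin n) → EuclideanSpace ℝ (Fin n))
    (hg : ∀ z, HasGradientAt f₂ (g z) z)
    (α αlo κ : ℝ) (hαlo : 0 < αlo) (hα : αlo ≤ α) (hκ : 0 ≤ κ)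
    (x e xplus : EuclideanSpace ℝ (Fin n)) (hx : x ∈ X)
    (hxplus : IsProx (fun y => α * f₁ y) X (x - α • (g x + e)) xplus)
    (he : ‖e‖ ≤ κ * ‖xplus - x‖)
    (q : EuclideanSpace ℝ (Fin n))
    (hq : IsProx f₁ X (x - g x) q) :
    ‖x - q‖ ≤ (1 + α * κ) / min 1 αlo * ‖x - xplus‖ := by
  have hα0 : (0:ℝ) < α := lt_of_lt_of_le hαlo hα
  have hφα : ConvexOn ℝ univ (fun y => α * f₁ y) := by
    simpa [smul_eq_mul] using hf₁.smul hα0.le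
  obtain ⟨pp, hpp⟩ := exists_isProx hφα hXne hXcl (x - α • g x)
  have VI1 := isProx_vi hφα hXcv hxplus
  have VI2 := isProx_vi hφα hXcv hpp
  have VI3 := isProx_vi hf₁ hXcv hq
  -- Step 1: nonexpansiveness: ‖xplus - pp‖ ≤ α * ‖e‖
  have hze : ‖xplus - pp‖ ≤ α * ‖e‖ := by
    have A := VI1 pp hpp.1
    have B := VI2 xplus hxplus.1
    rw [show pp - xplus = -(xplus - pp) from by abel, inner_neg_right] at A
    have heq : ⟪(x - α • g x) - pp, xplus - pp⟫ - ⟪(x - α • (g x + e)) - xplus, xplus - pp⟫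
        = ⟪xplus - pp, xplus - pp⟫ + ⟪α • e, xplus - pp⟫ := by
      rw [← inner_sub_left, ← inner_add_left]
      congr 1
      simp only [smul_add]
      abel
    have hz2 : ‖xplus - pp‖ ^ 2 ≤ α * ‖e‖ * ‖xplus - pp‖ := by
      have h1 : ⟪xplus - pp, xplus - pp⟫ + ⟪α • e, xplus - pp⟫ ≤ 0 := by
        rw [← heq]; linarith
      have h2 : ⟪-(α • e), xplus - pp⟫ ≤ ‖-(α • e)‖ * ‖xplus - pp‖ := real_inner_le_norm _ _
      rw [norm_neg, norm_smul, Real.norm_eq_abs, abs_of_pos hα0, inner_neg_left] at h2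
      rw [← real_inner_self_eq_norm_sq]
      linarith
    rcases eq_or_lt_of_le (norm_nonneg (xplus - pp)) with h|h
    · rw [← h]; positivity
    · nlinarith [hz2]
  -- Step 2: residual comparison between q and pp
  have key : α * ‖x - q‖ ^ 2 + ‖x - pp‖ ^ 2 ≤ (1 + α) * ⟪x - q, x - pp⟫ := by
    have B2 := VI2 q hq.1
    have C2 := VI3 pp hpp.1
    have hC2' : ⟪α • ((x - g x) - q), pp - q⟫ ≤ α * f₁ pp - α * f₁ q := by
      rw [real_inner_smul_left]
      have := mul_le_mul_of_nonneg_left C2 hα0.le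
      nlinarith [this]
    rw [show pp - q = -(q - pp) from by abel, inner_neg_right] at hC2'
    have heq2 : ⟪(x - α • g x) - pp, q - pp⟫ - ⟪α • ((x - g x) - q), q - pp⟫
        = ⟪(x - pp) - α • (x - q), (x - pp) - (x - q)⟫ := by
      rw [← inner_sub_left]
      congr 1
      · simp only [smul_sub]; abel
      · abel
    have hsum : ⟪(x - pp) - α • (x - q), (x - pp) - (x - q)⟫ ≤ 0 := by
      rw [← heq2]; linarith
    have hexp : ∀ bb cc : EuclideanSpace ℝ (Fin n), ⟪cc - α • bb, cc - bb⟫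
        = ‖cc‖ ^ 2 - (1 + α) * ⟪bb, cc⟫ + α * ‖bb‖ ^ 2 := by
      intro bb cc
      simp only [inner_sub_left, inner_sub_right, real_inner_smul_left]
      rw [real_inner_self_eq_norm_sq, real_inner_self_eq_norm_sq,
        real_inner_comm cc bb]
      ring
    rw [hexp (x - q) (x - pp)] at hsum
    linarith
  have hbc : α * ‖x - q‖ ^ 2 + ‖x - pp‖ ^ 2 ≤ (1 + α) * (‖x - q‖ * ‖x - pp‖) := by
    have := mul_le_mul_of_nonneg_left (real_inner_le_norm (x - q) (x - pp))
      (by linarith : (0:ℝ) ≤ 1 + α)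
    linarith
  have hm : min 1 α * ‖x - q‖ ≤ ‖x - pp‖ := by
    rcases le_or_gt ‖x - q‖ ‖x - pp‖ with h|h
    · calc min 1 α * ‖x - q‖ ≤ 1 * ‖x - q‖ :=
            mul_le_mul_of_nonneg_right (min_le_left _ _) (norm_nonneg _)
        _ = ‖x - q‖ := one_mul _
        _ ≤ ‖x - pp‖ := h
    · have h2 : α * ‖x - q‖ ≤ ‖x - pp‖ := by nlinarith [hbc, h]
      calc min 1 α * ‖x - q‖ ≤ α * ‖x - q‖ :=
            mul_le_mul_of_nonneg_right (min_le_right _ _) (norm_nonneg _)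
        _ ≤ ‖x - pp‖ := h2
  -- Step 3: triangle inequality
  have hcs : ‖x - pp‖ ≤ (1 + α * κ) * ‖x - xplus‖ := by
    have h1 : x - pp = (x - xplus) + (xplus - pp) := by abel
    have h2 : ‖x - pp‖ ≤ ‖x - xplus‖ + ‖xplus - pp‖ := by
      rw [h1]; exact norm_add_le _ _
    have h3 : α * ‖e‖ ≤ α * (κ * ‖xplus - x‖) := mul_le_mul_of_nonneg_left he hα0.le
    rw [norm_sub_rev xplus x] at h3
    nlinarith [h2, hze, h3]
  -- Conclusion
  have hmlo : (0:ℝ) < min 1 αlo := lt_min one_pos hαlo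
  have hmle : min 1 αlo ≤ min 1 α := min_le_min le_rfl hα
  rw [div_mul_eq_mul_div, le_div_iff₀ hmlo]
  calc ‖x - q‖ * min 1 αlo ≤ ‖x - q‖ * min 1 α :=
        mul_le_mul_of_nonneg_left hmle (norm_nonneg _)
    _ = min 1 α * ‖x - q‖ := mul_comm _ _
    _ ≤ ‖x - pp‖ := hm
    _ ≤ (1 + α * κ) * ‖x - xplus‖ := hcs
end
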